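/- arXiv:1311.7571 — 8 statements merged into one kernel-verified Lean document; each statement's English description precedes it below -/
import Mathlib

section
/- Let W ⊆ C^k ⊗ C^n and T ⊆ C^n be linear subspaces with dim W > k · dim T. Then there exists a unit vector x ∈ W whose Schmidt decomposition x = Σ_{i=1}^r √λ_i e_i ⊗ f_i (with λ_i > 0, {e_i} orthonormal in C^k, {f_i} orthonormal in C^n) satisfies f_i ⊥ T for all i = 1, …, r. -/
/-- Inner product `⟨u, v⟩ = ∑ conj(u i) v i`. -/
noncomputable def inn {ι : Type*} [Fintype ι] (u v : ι → ℂ) : ℂ :=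
  ∑ i, (starRingEnd ℂ) (u i) * v i

/-- The elementary tensor `e ⊗ f` in `ℂ^k ⊗ ℂ^n`. -/
def tensorVec {k n : ℕ} (e : Fin k → ℂ) (f : Fin n → ℂ) : Fin k × Fin n → ℂ :=
  fun p => e p.1 * f p.2

lemma inn_eq_dot {ι : Type*} [Fintype ι] (u v : ι → ℂ) :
    inn u v = dotProduct (star u) v := by
  simp [inn, dotProduct, Pi.star_apply]

lemma inn_smul_left {ι : Type*} [Fintype ι] (c : ℂ) (u v : ι → ℂ) :
    inn (c • u) v = (starRingEnd ℂ) c * inn u v := by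
  simp [inn, Finset.mul_sum, mul_assoc]

lemma inn_smul_right {ι : Type*} [Fintype ι] (c : ℂ) (u v : ι → ℂ) :
    inn u (c • v) = c * inn u v := by
  simp [inn, Finset.mul_sum]; ring_nf; simp [mul_comm, mul_left_comm]

lemma inn_self_eq {ι : Type*} [Fintype ι] (x : ι → ℂ) :
    inn x x = ((∑ i, Complex.normSq (x i) : ℝ) : ℂ) := by
  simp [inn, Complex.normSq_eq_conj_mul_self]

lemma inn_eq_inner {ι : Type*} [Fintype ι] (u v : EuclideanSpace ℂ ι) :
    inn u v = inner ℂ u v := by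
  simp [inn, PiLp.inner_apply, RCLike.inner_apply, mul_comm]

lemma exists_row_perp (k n : ℕ) (W : Submodule ℂ (Fin k × Fin n → ℂ))
    (T : Submodule ℂ (Fin n → ℂ))
    (hdim : k * Module.finrank ℂ T < Module.finrank ℂ W) :
    ∃ x ∈ W, x ≠ 0 ∧ ∀ (a : Fin k), ∀ g ∈ T, inn g (fun b => x (a, b)) = 0 := by
  classical
  set s := Module.finrank ℂ T with hs
  let g : Module.Basis (Fin s) ℂ T := Module.finBasis ℂ T
  let L : (Fin k × Fin n → ℂ) →ₗ[ℂ] (Fin k × Fin s → ℂ) :=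
    { toFun := fun x p => ∑ b, (starRingEnd ℂ) ((g p.2 : Fin n → ℂ) b) * x (p.1, b)
      map_add' := by
        intro x y; funext p; simp [mul_add, Finset.sum_add_distrib]
      map_smul' := by
        intro c x; funext p; simp [Finset.mul_sum]; ring_nf
        exact Finset.sum_congr rfl fun b _ => by ring }
  let L' := L.domRestrict W
  have hker : LinearMap.ker L' ≠ ⊥ := by
    intro hbot
    have h1 := LinearMap.finrank_range_add_finrank_ker L'
    rw [hbot, finrank_bot, add_zero] at h1
    have h2 : Module.finrank ℂ (LinearMap.range L') ≤ k * s := by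
      calc Module.finrank ℂ (LinearMap.range L')
          ≤ Module.finrank ℂ (Fin k × Fin s → ℂ) := Submodule.finrank_le _
        _ = k * s := by simp [Module.finrank_pi]
    omega
  obtain ⟨y, hy, hy0⟩ := Submodule.exists_mem_ne_zero_of_ne_bot hker
  refine ⟨(y : Fin k × Fin n → ℂ), y.2, ?_, ?_⟩
  · intro h
    exact hy0 (Subtype.ext h)
  · intro a g' hg'
    have hLy : L (y : Fin k × Fin n → ℂ) = 0 := hy
    have hbasis : ∀ j : Fin s, ∑ b, (starRingEnd ℂ) ((g j : Fin n → ℂ) b) * (y : Fin k × Fin n → ℂ) (a, b) = 0 := by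
      intro j
      have := congrFun hLy (a, j)
      simpa [L] using this
    -- expand g' in the basis
    have hrepr : ((∑ j, (g.repr ⟨g', hg'⟩ j) • g j : T) : Fin n → ℂ) = g' := by
      rw [Module.Basis.sum_repr g ⟨g', hg'⟩]
    have hrepr' : (∑ j, (g.repr ⟨g', hg'⟩ j) • (g j : Fin n → ℂ)) = g' := by
      calc (∑ j, (g.repr ⟨g', hg'⟩ j) • (g j : Fin n → ℂ))
          = ((∑ j, (g.repr ⟨g', hg'⟩ j) • g j : T) : Fin n → ℂ) := by norm_cast
        _ = g' := hrepr
    rw [inn, ← hrepr']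
    simp only [Finset.sum_apply, Pi.smul_apply, smul_eq_mul, map_sum, map_mul]
    simp only [Finset.sum_mul]
    rw [Finset.sum_comm]
    refine Finset.sum_eq_zero fun j _ => ?_
    have := hbasis j
    calc ∑ b, (starRingEnd ℂ) (g.repr ⟨g', hg'⟩ j) * (starRingEnd ℂ) ((g j : Fin n → ℂ) b) * (y : Fin k × Fin n → ℂ) (a, b)
        = (starRingEnd ℂ) (g.repr ⟨g', hg'⟩ j) * ∑ b, (starRingEnd ℂ) ((g j : Fin n → ℂ) b) * (y : Fin k × Fin n → ℂ) (a, b) := by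
          rw [Finset.mul_sum]; exact Finset.sum_congr rfl fun b _ => by ring
      _ = 0 := by rw [this, mul_zero]

open Matrix ComplexOrder in
lemma schmidt (k n : ℕ) (x : Fin k × Fin n → ℂ) (hx : inn x x = 1)
    (T : Submodule ℂ (Fin n → ℂ))
    (hT : ∀ (a : Fin k), ∀ g ∈ T, inn g (fun b => x (a, b)) = 0) :
    ∃ (r : ℕ) (lam : Fin r → ℝ) (e : Fin r → (Fin k → ℂ)) (f : Fin r → (Fin n → ℂ)),
      (∀ i, 0 < lam i) ∧ (∑ i, lam i = 1) ∧
      (∀ i j, inn (e i) (e j) = if i = j then 1 else 0) ∧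
      (∀ i j, inn (f i) (f j) = if i = j then 1 else 0) ∧
      x = ∑ i, (Real.sqrt (lam i) : ℂ) • tensorVec (e i) (f i) ∧
      (∀ i, ∀ g ∈ T, inn g (f i) = 0) := by
  classical
  set M : Matrix (Fin k) (Fin n) ℂ := Matrix.of (fun a b => x (a, b)) with hM
  have hPSD : (M * Mᴴ).PosSemidef := Matrix.posSemidef_self_mul_conjTranspose M
  have hA : (M * Mᴴ).IsHermitian := hPSD.isHermitian
  set μ : Fin k → ℝ := hA.eigenvalues with hμ
  have hμ0 : ∀ i, 0 ≤ μ i := fun i => hPSD.eigenvalues_nonneg i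
  set E : Fin k → (Fin k → ℂ) := fun j => ⇑(hA.eigenvectorBasis j) with hE
  have hEorth : ∀ i j, inn (E i) (E j) = if i = j then 1 else 0 := by
    intro i j
    rw [inn_eq_inner]
    exact orthonormal_iff_ite.mp hA.eigenvectorBasis.orthonormal i j
  set v : Fin k → (Fin n → ℂ) := fun j => Matrix.vecMul (star (E j)) M with hv
  have hvv : ∀ i j, inn (v i) (v j) = if i = j then (μ i : ℂ) else 0 := by
    intro i j
    rw [inn_eq_dot]
    have h1 : star (v i) = Matrix.mulVec Mᴴ (E i) := by
      rw [hv]; rw [Matrix.star_vecMul]; simp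
    rw [h1, dotProduct_comm]
    rw [hv]
    rw [Matrix.dotProduct_mulVec, Matrix.vecMul_vecMul]
    rw [← Matrix.dotProduct_mulVec]
    rw [hA.mulVec_eigenvectorBasis]
    rw [dotProduct_smul]
    have h2 : dotProduct (star (E j)) (E i) = inn (E j) (E i) := (inn_eq_dot _ _).symm
    rw [h2, hEorth]
    rcases eq_or_ne i j with rfl | hne
    · simp [Complex.real_smul, hμ]
    · simp [hne, Ne.symm hne]
  have hv0 : ∀ j, μ j = 0 → v j = 0 := by
    intro j hj
    have h1 := hvv j j
    rw [if_pos rfl, hj, inn_self_eq] at h1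
    have h2 : ∑ b, Complex.normSq (v j b) = 0 := by exact_mod_cast h1
    funext b
    have h3 := (Finset.sum_eq_zero_iff_of_nonneg (fun b _ => Complex.normSq_nonneg (v j b))).mp h2 b (Finset.mem_univ b)
    exact Complex.normSq_eq_zero.mp h3
  have hcomplete : ∀ a a' : Fin k, (∑ j, E j a * (starRingEnd ℂ) (E j a')) = if a = a' then 1 else 0 := by
    have hU := Matrix.mem_unitaryGroup_iff.mp (hA.eigenvectorUnitary).2
    intro a a'
    have h1 : ((hA.eigenvectorUnitary : Matrix (Fin k) (Fin k) ℂ) * star (hA.eigenvectorUnitary : Matrix (Fin k) (Fin k) ℂ)) a a' = (1 : Matrix (Fin k) (Fin k) ℂ) a a' := by rw [hU]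
    rw [Matrix.mul_apply] at h1
    simp only [Matrix.star_apply, Matrix.one_apply, hA.eigenvectorUnitary_apply] at h1
    simpa [hE] using h1
  have hsum_x : x = ∑ j, tensorVec (E j) (v j) := by
    funext p
    obtain ⟨a, b⟩ := p
    have h1 : ∀ j, v j b = ∑ a', (starRingEnd ℂ) (E j a') * M a' b := by
      intro j
      simp [hv, Matrix.vecMul, dotProduct, Pi.star_apply]
    calc x (a, b) = M a b := rfl
      _ = ∑ a', (if a = a' then (1:ℂ) else 0) * M a' b := by simp
      _ = ∑ a', (∑ j, E j a * (starRingEnd ℂ) (E j a')) * M a' b := by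
          exact Finset.sum_congr rfl fun a' _ => by rw [hcomplete]
      _ = ∑ a', ∑ j, E j a * ((starRingEnd ℂ) (E j a') * M a' b) := by
          exact Finset.sum_congr rfl fun a' _ => by rw [Finset.sum_mul]; exact Finset.sum_congr rfl fun j _ => by ring
      _ = ∑ j, ∑ a', E j a * ((starRingEnd ℂ) (E j a') * M a' b) := Finset.sum_comm
      _ = ∑ j, E j a * v j b := by
          exact Finset.sum_congr rfl fun j _ => by rw [h1, Finset.mul_sum]
      _ = (∑ j, tensorVec (E j) (v j)) (a, b) := by simp [tensorVec]
  have htrace : ∑ j, μ j = 1 := by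
    have h1 : Matrix.trace (M * Mᴴ) = ∑ j, (μ j : ℂ) := by
      conv_lhs => rw [hA.spectral_theorem]
      rw [Unitary.conjStarAlgAut_apply, Matrix.trace_mul_cycle]
      rw [Unitary.coe_star_mul_self]
      simp [Matrix.trace_diagonal, hμ]
    have h2 : Matrix.trace (M * Mᴴ) = inn x x := by
      simp only [Matrix.trace, Matrix.diag, Matrix.mul_apply, Matrix.conjTranspose_apply, inn,
        Fintype.sum_prod_type]
      exact Finset.sum_congr rfl fun a _ => Finset.sum_congr rfl fun b _ => by
        simp [hM, mul_comm]
    rw [h2, hx] at h1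
    have : ((∑ j, μ j : ℝ) : ℂ) = ((1:ℝ) : ℂ) := by push_cast; rw [h1]
    exact_mod_cast this
  have hvperp : ∀ j, ∀ g ∈ T, inn g (v j) = 0 := by
    intro j g hg
    have h1 : inn g (v j) = ∑ a, (starRingEnd ℂ) (E j a) * inn g (fun b => x (a, b)) := by
      simp only [inn, hv, Matrix.vecMul, dotProduct, Pi.star_apply, Finset.mul_sum]
      rw [Finset.sum_comm]
      exact Finset.sum_congr rfl fun a _ => Finset.sum_congr rfl fun b _ => by
        simp [hM]; ring
    rw [h1]
    exact Finset.sum_eq_zero fun a _ => by rw [hT a g hg, mul_zero]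
  -- index the positive eigenvalues
  set P := {j : Fin k // μ j ≠ 0} with hP
  set r := Fintype.card P with hr
  set σ : Fin r ≃ P := (Fintype.equivFin P).symm with hσ
  have hμpos : ∀ i : Fin r, 0 < μ (σ i).1 :=
    fun i => lt_of_le_of_ne (hμ0 _) (Ne.symm (σ i).2)
  refine ⟨r, fun i => μ (σ i).1, fun i => E (σ i).1,
    fun i => (((Real.sqrt (μ (σ i).1))⁻¹ : ℝ) : ℂ) • v (σ i).1, hμpos, ?_, ?_, ?_, ?_, ?_⟩
  · -- sum of eigenvalues
    rw [← htrace]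
    calc ∑ i : Fin r, μ (σ i).1 = ∑ p : P, μ p.1 := Equiv.sum_comp σ (fun p : P => μ p.1)
      _ = ∑ j ∈ Finset.univ.filter (fun j => μ j ≠ 0), μ j :=
          (Finset.sum_subtype _ (by simp) _).symm
      _ = ∑ j, μ j := Finset.sum_filter_of_ne (fun j _ h => h)
  · intro i j
    rw [hEorth]
    rcases eq_or_ne i j with rfl | hne
    · simp
    · have : (σ i).1 ≠ (σ j).1 := fun h => hne (σ.injective (Subtype.ext h))
      simp [hne, this]
  · intro i j
    rw [inn_smul_left, inn_smul_right, hvv]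
    rcases eq_or_ne i j with rfl | hne
    · have hpos := hμpos i
      have h1 : ((Real.sqrt (μ (σ i).1))⁻¹ : ℝ) * (((Real.sqrt (μ (σ i).1))⁻¹ : ℝ) * (μ (σ i).1 : ℝ)) = 1 := by
        rw [← Real.mul_self_sqrt (le_of_lt hpos)]
        have hs : Real.sqrt (μ (σ i).1) ≠ 0 := ne_of_gt (Real.sqrt_pos.mpr hpos)
        field_simp
        rw [Real.sqrt_sq (Real.sqrt_nonneg _)]
      simp only [if_pos, Complex.conj_ofReal, if_true, eq_self_iff_true]
      exact_mod_cast congrArg (fun t : ℝ => (t : ℂ)) h1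
    · have h : (σ i).1 ≠ (σ j).1 := fun h => hne (σ.injective (Subtype.ext h))
      simp [hne, h]
  · -- decomposition
    have hterm : ∀ i : Fin r,
        (Real.sqrt (μ (σ i).1) : ℂ) • tensorVec (E (σ i).1) ((((Real.sqrt (μ (σ i).1))⁻¹ : ℝ) : ℂ) • v (σ i).1)
          = tensorVec (E (σ i).1) (v (σ i).1) := by
      intro i
      have hs : Real.sqrt (μ (σ i).1) ≠ 0 := ne_of_gt (Real.sqrt_pos.mpr (hμpos i))
      funext p
      simp only [tensorVec, Pi.smul_apply, smul_eq_mul]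
      have hs' : (Real.sqrt (μ (σ i).1) : ℂ) ≠ 0 := by exact_mod_cast hs
      push_cast
      field_simp
    have hzero : ∀ j, μ j = 0 → tensorVec (E j) (v j) = 0 := by
      intro j hj
      funext p
      simp [tensorVec, hv0 j hj]
    rw [hsum_x]
    calc (∑ j, tensorVec (E j) (v j))
        = ∑ j ∈ Finset.univ.filter (fun j => μ j ≠ 0), tensorVec (E j) (v j) := by
          rw [Finset.sum_filter_of_ne]
          intro j _ hne
          intro hj
          exact hne (hzero j hj)
      _ = ∑ p : P, tensorVec (E p.1) (v p.1) := Finset.sum_subtype _ (by simp) _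
      _ = ∑ i : Fin r, tensorVec (E (σ i).1) (v (σ i).1) :=
          (Equiv.sum_comp σ (fun p : P => tensorVec (E p.1) (v p.1))).symm
      _ = _ := Finset.sum_congr rfl fun i _ => (hterm i).symm
  · intro i g hg
    rw [inn_smul_right, hvperp _ g hg, mul_zero]

/-- if `W ⊆ ℂ^k ⊗ ℂ^n` and `T ⊆ ℂ^n` are subspaces with
`dim W > k · dim T`, then there is a unit vector `x ∈ W` whose Schmidt decomposition
`x = ∑ √λ_i e_i ⊗ f_i` (λ_i > 0, `{e_i}`, `{f_i}` orthonormal) has all `f_i ⊥ T`. -/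
theorem stmt3 (k n : ℕ) (W : Submodule ℂ (Fin k × Fin n → ℂ)) (T : Submodule ℂ (Fin n → ℂ))
    (hdim : k * Module.finrank ℂ T < Module.finrank ℂ W) :
    ∃ x ∈ W, inn x x = 1 ∧
      ∃ (r : ℕ) (lam : Fin r → ℝ) (e : Fin r → (Fin k → ℂ)) (f : Fin r → (Fin n → ℂ)),
        (∀ i, 0 < lam i) ∧ (∑ i, lam i = 1) ∧
        (∀ i j, inn (e i) (e j) = if i = j then 1 else 0) ∧
        (∀ i j, inn (f i) (f j) = if i = j then 1 else 0) ∧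
        x = ∑ i, (Real.sqrt (lam i) : ℂ) • tensorVec (e i) (f i) ∧
        (∀ i, ∀ g ∈ T, inn g (f i) = 0) := by
  obtain ⟨x₀, hx₀W, hx₀ne, hperp⟩ := exists_row_perp k n W T hdim
  set N : ℝ := ∑ p, Complex.normSq (x₀ p) with hN
  have hNpos : 0 < N := by
    have hex : ∃ p, x₀ p ≠ 0 := by
      by_contra h; push_neg at h; exact hx₀ne (funext h)
    obtain ⟨p, hp⟩ := hex
    exact Finset.sum_pos' (fun q _ => Complex.normSq_nonneg _)
      ⟨p, Finset.mem_univ p, Complex.normSq_pos.mpr hp⟩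
  set c : ℝ := (Real.sqrt N)⁻¹ with hc
  set x : Fin k × Fin n → ℂ := (c : ℂ) • x₀ with hx
  have hxW : x ∈ W := W.smul_mem _ hx₀W
  have hxx : inn x x = 1 := by
    rw [hx, inn_smul_left, inn_smul_right, inn_self_eq, ← hN, Complex.conj_ofReal]
    have h1 : (c * (c * N) : ℝ) = 1 := by
      rw [hc, ← Real.mul_self_sqrt hNpos.le]
      have : Real.sqrt N ≠ 0 := ne_of_gt (Real.sqrt_pos.mpr hNpos)
      field_simp
      rw [Real.sqrt_sq (Real.sqrt_nonneg _)]
    exact_mod_cast congrArg (fun t : ℝ => (t : ℂ)) h1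
  have hperp' : ∀ a, ∀ g ∈ T, inn g (fun b => x (a, b)) = 0 := by
    intro a g hg
    have h2 : (fun b => x (a, b)) = (c : ℂ) • (fun b => x₀ (a, b)) := by
      funext b; simp [hx]
    rw [h2, inn_smul_right, hperp a g hg, mul_zero]
  obtain ⟨r, lam, e, f, h1, h2, h3, h4, h5, h6⟩ := schmidt k n x hxx T hperp'
  exact ⟨x, hxW, hxx, r, lam, e, f, h1, h2, h3, h4, h5, h6⟩
end

section
/- Let (P_n) be a sequence of orthogonal projections in M_k ⊗ M_n satisfying: for every A ∈ D_k, ‖P_n(A ⊗ I_n)P_n‖ → f(A). Let K_n = Φ_n(D_{N_n}) be the image of the state space under the quantum channel Φ_n associated to P_n, and let K = {B ∈ D_k : Tr[BA] ≤ f(A) ∀A ∈ D_k}. Then limsup_n K_n ⊆ K, i.e. every point that lies in K_n for infinitely many n belongs to K. -/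
open Matrix Kronecker Filter ComplexOrder

/-- Partial trace over the second tensor factor of `ℂ^k ⊗ ℂ^n`. -/
noncomputable def ptrace {k n : ℕ} (M : Matrix (Fin k × Fin n) (Fin k × Fin n) ℂ) :
    Matrix (Fin k) (Fin k) ℂ :=
  Matrix.of fun i j => ∑ a : Fin n, M (i, a) (j, a)

lemma trace_ptrace_mul {k n : ℕ} (M : Matrix (Fin k × Fin n) (Fin k × Fin n) ℂ)
    (A : Matrix (Fin k) (Fin k) ℂ) :
    (ptrace M * A).trace = (M * (A ⊗ₖ (1 : Matrix (Fin n) (Fin n) ℂ))).trace := by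
  simp only [Matrix.trace, Matrix.diag, Matrix.mul_apply, ptrace, of_apply,
    Fintype.sum_prod_type, kroneckerMap_apply, Matrix.one_apply, mul_ite, mul_one, mul_zero,
    Finset.sum_ite_eq', Finset.mem_univ, if_true, Finset.sum_mul]
  -- inspect
  show _ = _
  rw [Finset.sum_comm]
  rw [Finset.sum_comm]
  exact Finset.sum_congr rfl fun x _ => Finset.sum_comm

lemma ptrace_trace {k n : ℕ} (M : Matrix (Fin k × Fin n) (Fin k × Fin n) ℂ) :
    (ptrace M).trace = M.trace := by
  simp [ptrace, Matrix.trace, Matrix.diag, Fintype.sum_prod_type]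

lemma ptrace_posSemidef {k n : ℕ} {M : Matrix (Fin k × Fin n) (Fin k × Fin n) ℂ}
    (hM : M.PosSemidef) : (ptrace M).PosSemidef := by
  refine PosSemidef.of_dotProduct_mulVec_nonneg ?_ ?_
  · ext i j
    simp only [conjTranspose_apply, ptrace, of_apply, star_sum]
    exact Finset.sum_congr rfl fun a _ => hM.1.apply (i, a) (j, a)
  · intro x
    have key : star x ⬝ᵥ (ptrace M *ᵥ x)
        = ∑ a : Fin n, star (fun p : Fin k × Fin n => if p.2 = a then x p.1 else 0) ⬝ᵥ
            (M *ᵥ (fun p : Fin k × Fin n => if p.2 = a then x p.1 else 0)) := by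
      simp only [dotProduct, mulVec, ptrace, of_apply, Fintype.sum_prod_type, Pi.star_apply,
        apply_ite (star : ℂ → ℂ), star_zero, ite_mul, zero_mul, mul_ite, mul_zero,
        Finset.sum_ite_eq, Finset.sum_ite_eq', Finset.mem_univ, if_true, Finset.mul_sum, Finset.sum_mul]
      have hc : ∀ (a : Fin n) (i : Fin k),
          (∑ b : Fin n, ∑ j : Fin k,
            if b = a then star (x i) * (M (i, b) (j, a) * x j) else 0)
          = ∑ j : Fin k, star (x i) * (M (i, a) (j, a) * x j) := by
        intro a i
        rw [Finset.sum_comm]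
        simp
      simp only [hc]
      exact (Finset.sum_congr rfl fun i _ => Finset.sum_comm).trans Finset.sum_comm
    rw [key]
    exact Finset.sum_nonneg fun a _ => hM.dotProduct_mulVec_nonneg _

lemma quad_re_le {m : Type*} [Fintype m] [DecidableEq m] (M : Matrix m m ℂ) (x : m → ℂ) :
    (star x ⬝ᵥ (M *ᵥ x)).re ≤
      ‖Matrix.toEuclideanCLM (𝕜 := ℂ) M‖ * (star x ⬝ᵥ x).re := by
  set T := Matrix.toEuclideanCLM (𝕜 := ℂ) M
  set x' : EuclideanSpace ℂ m := (WithLp.equiv 2 _).symm x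
  have h1 : star x ⬝ᵥ (M *ᵥ x) = inner ℂ x' (T x') := by
    rw [show T x' = (WithLp.equiv 2 _).symm (M *ᵥ x) from by
      simp [T, x', Matrix.toEuclideanCLM_toLp, Matrix.toLin'_apply]]
    rw [dotProduct_comm]; rfl
  have h2 : star x ⬝ᵥ x = inner ℂ x' x' := by rw [dotProduct_comm]; rfl
  rw [h1, h2]
  simp only [← RCLike.re_to_complex]
  calc RCLike.re (inner ℂ x' (T x') : ℂ) ≤ ‖x'‖ * ‖T x'‖ := re_inner_le_norm x' (T x')
    _ ≤ ‖x'‖ * (‖T‖ * ‖x'‖) := by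
        exact mul_le_mul_of_nonneg_left (T.le_opNorm x') (norm_nonneg _)
    _ = ‖T‖ * RCLike.re (inner ℂ x' x' : ℂ) := by
        rw [inner_self_eq_norm_sq]; ring

lemma star_mulVec_dot {p q : Type*} [Fintype p] [Fintype q] (W : Matrix p q ℂ) (v : q → ℂ)
    (z : p → ℂ) :
    star (W *ᵥ v) ⬝ᵥ z = star v ⬝ᵥ (Wᴴ *ᵥ z) := by
  rw [star_mulVec, ← Matrix.dotProduct_mulVec]

open scoped MatrixOrder in
lemma exists_herm_sqrt {q : Type*} [Fintype q] [DecidableEq q] {ρ : Matrix q q ℂ}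
    (hρ : ρ.PosSemidef) : ∃ s : Matrix q q ℂ, s * s = ρ ∧ s.IsHermitian := by
  refine ⟨CFC.sqrt ρ, CFC.sqrt_mul_sqrt_self ρ hρ.nonneg, ?_⟩
  exact (Matrix.nonneg_iff_posSemidef.mp (CFC.sqrt_nonneg ρ)).1

lemma trace_quad_le {p q : Type*} [Fintype p] [Fintype q] [DecidableEq p] [DecidableEq q]
    (W : Matrix p q ℂ) (hW : Wᴴ * W = 1)
    {ρ : Matrix q q ℂ} (hρ : ρ.PosSemidef) (hρ1 : ρ.trace = 1)
    (M : Matrix p p ℂ) :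
    ((ρ * (Wᴴ * M * W)).trace).re ≤ ‖Matrix.toEuclideanCLM (𝕜 := ℂ) M‖ := by
  set C := Wᴴ * M * W with hC
  obtain ⟨s, hs, hsH⟩ := exists_herm_sqrt hρ
  have hsh : sᴴ = s := hsH
  set y : q → q → ℂ := fun i j => s j i with hy
  have hcol : ∀ i l, star (y i) l = s i l := by
    intro i l
    simp only [hy, Pi.star_apply]
    exact hsH.apply i l
  have e1 : (ρ * C).trace = ∑ i, star (y i) ⬝ᵥ (C *ᵥ y i) := by
    rw [← hs, Matrix.mul_assoc, Matrix.trace_mul_comm]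
    simp only [Matrix.trace, Matrix.diag, Matrix.mul_apply, dotProduct, mulVec,
      Finset.sum_mul, Finset.mul_sum]
    refine Finset.sum_congr rfl fun i _ => ?_
    rw [Finset.sum_comm]
    refine Finset.sum_congr rfl fun l _ => Finset.sum_congr rfl fun j _ => ?_
    rw [hcol i l]
    ring
  have e2 : ρ.trace = ∑ i, star (y i) ⬝ᵥ y i := by
    rw [← hs]
    simp only [Matrix.trace, Matrix.diag, Matrix.mul_apply, dotProduct]
    refine Finset.sum_congr rfl fun i _ => Finset.sum_congr rfl fun l _ => ?_
    rw [hcol i l]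
  have term : ∀ i, (star (y i) ⬝ᵥ (C *ᵥ y i)).re ≤
      ‖Matrix.toEuclideanCLM (𝕜 := ℂ) M‖ * (star (y i) ⬝ᵥ y i).re := by
    intro i
    have hCv : C *ᵥ y i = Wᴴ *ᵥ (M *ᵥ (W *ᵥ y i)) := by
      simp [hC, ← Matrix.mulVec_mulVec, Matrix.mul_assoc]
    rw [hCv, ← star_mulVec_dot]
    have hWW : star (W *ᵥ y i) ⬝ᵥ (W *ᵥ y i) = star (y i) ⬝ᵥ y i := by
      rw [star_mulVec_dot, Matrix.mulVec_mulVec, hW, Matrix.one_mulVec]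
    calc (star (W *ᵥ y i) ⬝ᵥ (M *ᵥ (W *ᵥ y i))).re
        ≤ ‖Matrix.toEuclideanCLM (𝕜 := ℂ) M‖ * (star (W *ᵥ y i) ⬝ᵥ (W *ᵥ y i)).re :=
          quad_re_le M (W *ᵥ y i)
      _ = ‖Matrix.toEuclideanCLM (𝕜 := ℂ) M‖ * (star (y i) ⬝ᵥ y i).re := by rw [hWW]
  calc ((ρ * C).trace).re = ∑ i, (star (y i) ⬝ᵥ (C *ᵥ y i)).re := by
        rw [e1, Complex.re_sum]
    _ ≤ ∑ i, ‖Matrix.toEuclideanCLM (𝕜 := ℂ) M‖ * (star (y i) ⬝ᵥ y i).re :=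
        Finset.sum_le_sum fun i _ => term i
    _ = ‖Matrix.toEuclideanCLM (𝕜 := ℂ) M‖ * (∑ i, star (y i) ⬝ᵥ y i).re := by
        rw [Complex.re_sum, Finset.mul_sum]
    _ = ‖Matrix.toEuclideanCLM (𝕜 := ℂ) M‖ := by
        rw [← e2, hρ1, Complex.one_re, mul_one]

/-- if the projections `P_n = V_n V_nᴴ` satisfy
`‖P_n (A ⊗ I_n) P_n‖ → f(A)` for every state `A ∈ D_k`, then every state `B` that lies in
the output set `K_n = Φ_n(D_{N_n})` for infinitely many `n` belongs to
`K = {B ∈ D_k : Tr[B A] ≤ f(A) ∀ A ∈ D_k}`. -/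
theorem stmt6 (k : ℕ) (N : ℕ → ℕ)
    (V : (n : ℕ) → Matrix (Fin k × Fin n) (Fin (N n)) ℂ)
    (hV : ∀ n, (V n)ᴴ * V n = 1)
    (f : Matrix (Fin k) (Fin k) ℂ → ℝ)
    (hlim : ∀ A : Matrix (Fin k) (Fin k) ℂ, A.PosSemidef → A.trace = 1 →
      Tendsto (fun n => ‖Matrix.toEuclideanCLM (𝕜 := ℂ)
        ((V n * (V n)ᴴ) * (A ⊗ₖ (1 : Matrix (Fin n) (Fin n) ℂ)) * (V n * (V n)ᴴ))‖)
        atTop (nhds (f A)))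
    (B : Matrix (Fin k) (Fin k) ℂ)
    (hB : ∀ N₀ : ℕ, ∃ n ≥ N₀, ∃ ρ : Matrix (Fin (N n)) (Fin (N n)) ℂ,
      ρ.PosSemidef ∧ ρ.trace = 1 ∧ B = ptrace (V n * ρ * (V n)ᴴ)) :
    B.PosSemidef ∧ B.trace = 1 ∧
      ∀ A : Matrix (Fin k) (Fin k) ℂ, A.PosSemidef → A.trace = 1 →
        (Matrix.trace (B * A)).re ≤ f A := by
  obtain ⟨n₀, -, ρ₀, hρ₀, hρtr₀, hBeq₀⟩ := hB 0
  refine ⟨?_, ?_, ?_⟩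
  · rw [hBeq₀]
    exact ptrace_posSemidef (by simpa using hρ₀.conjTranspose_mul_mul_same (V n₀)ᴴ)
  · rw [hBeq₀, ptrace_trace, Matrix.trace_mul_cycle, hV n₀, one_mul, hρtr₀]
  · intro A hA hA1
    by_contra hcon
    push_neg at hcon
    have hfreq : ∃ᶠ n in atTop, ((B * A).trace).re ≤ ‖Matrix.toEuclideanCLM (𝕜 := ℂ)
        ((V n * (V n)ᴴ) * (A ⊗ₖ (1 : Matrix (Fin n) (Fin n) ℂ)) * (V n * (V n)ᴴ))‖ := by
      rw [frequently_atTop]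
      intro N₀
      obtain ⟨n, hn, ρ, hρ, hρtr, hBeq⟩ := hB N₀
      refine ⟨n, hn, ?_⟩
      set W := V n with hWdef
      set X : Matrix (Fin k × Fin n) (Fin k × Fin n) ℂ := A ⊗ₖ 1 with hXdef
      have h1 : Wᴴ * (W * Wᴴ * X * (W * Wᴴ)) * W = Wᴴ * X * W := by
        simp only [← Matrix.mul_assoc]
        rw [hV n, Matrix.one_mul, Matrix.mul_assoc (Wᴴ * X * W) Wᴴ W, hV n, Matrix.mul_one]
      have h2 : (B * A).trace = (ρ * (Wᴴ * (W * Wᴴ * X * (W * Wᴴ)) * W)).trace := by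
        rw [h1, hBeq, trace_ptrace_mul, ← hXdef,
          Matrix.mul_assoc (W * ρ) Wᴴ X, Matrix.trace_mul_comm (W * ρ) (Wᴴ * X),
          ← Matrix.mul_assoc (Wᴴ * X) W ρ, Matrix.trace_mul_comm _ ρ, Matrix.mul_assoc Wᴴ X W]
      rw [h2]
      exact trace_quad_le W (hV n) hρ hρtr _
    have hev : ∀ᶠ n in atTop, ‖Matrix.toEuclideanCLM (𝕜 := ℂ)
        ((V n * (V n)ᴴ) * (A ⊗ₖ (1 : Matrix (Fin n) (Fin n) ℂ)) * (V n * (V n)ᴴ))‖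
        < ((B * A).trace).re := (hlim A hA hA1).eventually_lt_const hcon
    obtain ⟨n, hle, hlt⟩ := (hfreq.and_eventually hev).exists
    exact absurd hle (not_le.mpr hlt)
end

section
/- (Straszewicz) For any closed convex set K ⊆ R^d, the set of exposed points of K is dense in the set of extreme points of K. -/
open Set Module RealInnerProductSpace

lemma my_sum_extend {ι κ M : Type*} [Fintype ι] [Fintype κ] [AddCommMonoid M]
    (e : ι ↪ κ) (g : ι → M) : ∑ i, Function.extend e g 0 i = ∑ j, g j := by
  classical
  have h1 : ∑ i : κ, Function.extend e g 0 i
      = ∑ i ∈ Finset.univ.image e, Function.extend e g 0 i := by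
    refine (Finset.sum_subset (Finset.subset_univ _) fun i _ hi => ?_).symm
    refine Function.extend_apply' _ _ _ ?_
    rintro ⟨j, rfl⟩; exact hi (Finset.mem_image_of_mem _ (Finset.mem_univ j))
  rw [h1, Finset.sum_image (fun a _ b _ h => e.injective h)]
  simp [e.injective.extend_apply]

/-- Convex hull of a compact set in a finite-dimensional normed space is compact. -/
theorem my_isCompact_convexHull {F : Type*} [NormedAddCommGroup F] [NormedSpace ℝ F]
    [FiniteDimensional ℝ F] {s : Set F} (hs : IsCompact s) :
    IsCompact (convexHull ℝ s) := by
  classical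
  rcases s.eq_empty_or_nonempty with rfl | ⟨x₀, hx₀⟩
  · simp
  set n := finrank ℝ F + 1 with hn
  have himg : convexHull ℝ s =
      (fun p : (Fin n → F) × (Fin n → ℝ) => ∑ i, p.2 i • p.1 i) ''
        ((Set.univ.pi fun _ => s) ×ˢ stdSimplex ℝ (Fin n)) := by
    apply Set.Subset.antisymm
    · intro x hx
      obtain ⟨ι, hι, z, w, hzs, hai, hwpos, hwsum, hwz⟩ :=
        eq_pos_convex_span_of_mem_convexHull hx
      have hcard : Fintype.card ι ≤ Fintype.card (Fin n) := by
        rw [Fintype.card_fin]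
        exact hai.card_le_finrank_succ.trans
          (Nat.add_le_add_right (Submodule.finrank_le _) 1)
      obtain ⟨e⟩ := Function.Embedding.nonempty_of_card_le hcard
      refine ⟨(Function.extend e z fun _ => x₀, Function.extend e w 0), ⟨?_, ?_, ?_⟩, ?_⟩
      · intro i _
        dsimp only
        by_cases h : ∃ j, e j = i
        · obtain ⟨j, rfl⟩ := h
          rw [e.injective.extend_apply]
          exact hzs (Set.mem_range_self j)
        · rw [Function.extend_apply' _ _ _ h]; exact hx₀
      · intro i
        dsimp only
        by_cases h : ∃ j, (e : ι → Fin n) j = i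
        · obtain ⟨j, rfl⟩ := h
          rw [e.injective.extend_apply]
          exact (hwpos j).le
        · rw [Function.extend_apply' _ _ _ h]; rfl
      · dsimp only
        rw [my_sum_extend]; exact hwsum
      · dsimp only
        have heq : (fun i => Function.extend e w 0 i • Function.extend e z (fun _ => x₀) i)
            = Function.extend e (fun j => w j • z j) 0 := by
          funext i
          by_cases h : ∃ j, (e : ι → Fin n) j = i
          · obtain ⟨j, rfl⟩ := h
            rw [e.injective.extend_apply, e.injective.extend_apply, e.injective.extend_apply]
          · rw [Function.extend_apply' _ _ _ h, Function.extend_apply' _ _ _ h,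
              Function.extend_apply' _ _ _ h]
            simp
        calc ∑ i, Function.extend e w 0 i • Function.extend e z (fun _ => x₀) i
            = ∑ i, Function.extend e (fun j => w j • z j) 0 i := by rw [heq]
          _ = ∑ j, w j • z j := my_sum_extend e _
          _ = x := hwz
    · rintro x ⟨⟨z, w⟩, ⟨hz, hw⟩, rfl⟩
      exact (convex_convexHull ℝ s).sum_mem (fun i _ => hw.1 i) hw.2
        (fun i _ => subset_convexHull ℝ s (hz i (Set.mem_univ i)))
  rw [himg]
  refine IsCompact.image ?_ ?_
  · exact (isCompact_univ_pi fun _ => hs).prod (isCompact_stdSimplex _ _)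
  · exact continuous_finset_sum _ fun i _ =>
      ((continuous_apply i).comp continuous_snd).smul ((continuous_apply i).comp continuous_fst)

section inner_space
variable {E : Type*} [NormedAddCommGroup E] [InnerProductSpace ℝ E]


/-- A farthest point of `K` from `q` is an exposed point of `K`. -/
theorem my_farthest_exposed {K : Set E} {q y : E} (hyK : y ∈ K)
    (hfar : ∀ z ∈ K, dist q z ≤ dist q y) : y ∈ K.exposedPoints ℝ := by
  refine ⟨hyK, innerSL ℝ (y - q), fun z hz => ?_⟩
  have hR : ‖z - q‖ ≤ ‖y - q‖ := by
    simpa [dist_eq_norm, norm_sub_rev] using hfar z hz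
  have hCS : ⟪y - q, z - q⟫ ≤ ‖y - q‖ * ‖z - q‖ := real_inner_le_norm _ _
  have hyy : ⟪y - q, y - q⟫ = ‖y - q‖ ^ 2 := real_inner_self_eq_norm_sq _
  have hsplit : ⟪y - q, z⟫ - ⟪y - q, y⟫ = ⟪y - q, z - q⟫ - ⟪y - q, y - q⟫ := by
    rw [← inner_sub_right, ← inner_sub_right]
    congr 1
    abel
  constructor
  · simp only [innerSL_apply_apply]
    nlinarith [norm_nonneg (y - q), norm_nonneg (z - q)]
  · intro hle
    simp only [innerSL_apply_apply] at hle
    have hzy : ‖z - q - (y - q)‖ ^ 2 = ‖z - q‖ ^ 2 - 2 * ⟪z - q, y - q⟫ + ‖y - q‖ ^ 2 :=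
      norm_sub_sq_real _ _
    have hsym : ⟪z - q, y - q⟫ = ⟪y - q, z - q⟫ := real_inner_comm _ _
    have hzy' : z - q - (y - q) = z - y := by abel
    rw [hzy', hsym] at hzy
    have hge : ‖y - q‖ ^ 2 ≤ ⟪y - q, z - q⟫ := by nlinarith
    have hR2 : ‖z - q‖ ^ 2 ≤ ‖y - q‖ ^ 2 := by nlinarith [norm_nonneg (z - q)]
    have h0 : ‖z - y‖ ^ 2 ≤ 0 := by linarith
    have : ‖z - y‖ = 0 := le_antisymm (by nlinarith [norm_nonneg (z - y)]) (norm_nonneg _)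
    exact sub_eq_zero.mp (norm_eq_zero.mp this)

end inner_space

section fin_dim
variable {E : Type*} [NormedAddCommGroup E] [InnerProductSpace ℝ E] [FiniteDimensional ℝ E]


/-- Compact case of Straszewicz: near any extreme point there is an exposed point. -/
theorem my_compact_case {K : Set E} (hcomp : IsCompact K) (hconv : Convex ℝ K)
    {x : E} (hx : x ∈ K.extremePoints ℝ) {ε : ℝ} (hε : 0 < ε) :
    ∃ y ∈ K.exposedPoints ℝ, dist x y < ε := by
  classical
  have hxK : x ∈ K := hx.1
  set S := K \ Metric.ball x ε with hSdef
  -- distance function maximizer machinery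
  rcases S.eq_empty_or_nonempty with hSemp | hSne
  · -- K ⊆ ball x ε : farthest point from x works
    obtain ⟨y, hyK, hy⟩ := hcomp.exists_isMaxOn (f := fun z => dist x z) ⟨x, hxK⟩
      (continuous_const.dist continuous_id).continuousOn
    refine ⟨y, my_farthest_exposed hyK fun z hz => hy hz, ?_⟩
    have : y ∈ Metric.ball x ε := by
      by_contra h
      exact (Set.eq_empty_iff_forall_notMem.mp hSemp y) ⟨hyK, h⟩
    simpa [dist_comm] using this
  · set C := convexHull ℝ S with hCdef
    have hScomp : IsCompact S := hcomp.diff Metric.isOpen_ball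
    have hCcomp : IsCompact C := my_isCompact_convexHull hScomp
    have hCK : C ⊆ K := convexHull_min Set.diff_subset hconv
    have hxC : x ∉ C := by
      intro hxC
      have hxext : x ∈ C.extremePoints ℝ :=
        inter_extremePoints_subset_extremePoints_of_subset hCK ⟨hxC, hx⟩
      have : x ∈ S := extremePoints_convexHull_subset hxext
      exact this.2 (Metric.mem_ball_self hε)
    obtain ⟨l, u, hlu, hux⟩ :=
      geometric_hahn_banach_closed_point (convex_convexHull ℝ S) hCcomp.isClosed hxC
    set w := (InnerProductSpace.toDual ℝ E).symm l with hwdef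
    have hw : ∀ v, ⟪w, v⟫ = l v := fun v => InnerProductSpace.toDual_symm_apply
    set β := l x - u with hβdef
    have hβ : 0 < β := by simp only [hβdef]; linarith
    obtain ⟨R, hR⟩ := hcomp.isBounded.subset_closedBall x
    have hR0 : 0 ≤ R := by
      have := hR hxK
      simpa using this
    set t := R ^ 2 / (2 * β) + 1 with htdef
    have ht : 0 < t := by positivity
    have htβ : R ^ 2 < 2 * t * β := by
      have h1 : 2 * t * β = R ^ 2 + 2 * β := by
        rw [htdef]
        field_simp
      linarith
    set q := x - t • w with hqdef
    have hkey : ∀ z ∈ S, dist q z < dist q x := by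
      intro z hzS
      have hzK : z ∈ K := hzS.1
      have hlz : l z < u := hlu z (subset_convexHull ℝ S hzS)
      have hxz : ‖x - z‖ ≤ R := by
        have h := hR hzK
        rw [Metric.mem_closedBall] at h
        rwa [show ‖x - z‖ = dist x z from (dist_eq_norm _ _).symm, dist_comm]
      have hqz : q - z = (x - z) - t • w := by rw [hqdef]; abel
      have hinner : ⟪x - z, t • w⟫ = t * (l x - l z) := by
        rw [real_inner_smul_right, real_inner_comm, inner_sub_right, hw, hw]
      have h1 : dist q z ^ 2 = ‖x - z‖ ^ 2 - 2 * (t * (l x - l z)) + ‖t • w‖ ^ 2 := by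
        rw [dist_eq_norm, hqz, norm_sub_sq_real, hinner]
      have h2 : dist q x = ‖t • w‖ := by
        rw [dist_eq_norm, hqdef, show x - t • w - x = -(t • w) from by abel, norm_neg]
      have hsq : dist q z ^ 2 < dist q x ^ 2 := by
        rw [h1, h2]
        nlinarith [norm_nonneg (x - z)]
      nlinarith [dist_nonneg (x := q) (y := z), dist_nonneg (x := q) (y := x)]
    obtain ⟨y, hyK, hy⟩ := hcomp.exists_isMaxOn (f := fun z => dist q z) ⟨x, hxK⟩
      (continuous_const.dist continuous_id).continuousOn
    refine ⟨y, my_farthest_exposed hyK fun z hz => hy hz, ?_⟩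
    have hyS : y ∉ S := by
      intro hyS
      exact absurd (lt_of_lt_of_le (hkey y hyS) (hy hxK)) (lt_irrefl _)
    have : y ∈ Metric.ball x ε := by
      by_contra h
      exact hyS ⟨hyK, h⟩
    simpa [dist_comm] using this


/-- Closed case of Straszewicz: near any extreme point there is an exposed point. -/
theorem my_closed_case {K : Set E} (hK : IsClosed K) (hconv : Convex ℝ K)
    {x : E} (hx : x ∈ K.extremePoints ℝ) {ε : ℝ} (hε : 0 < ε) :
    ∃ y ∈ K.exposedPoints ℝ, dist x y < ε := by
  classical
  set D := K ∩ Metric.closedBall x ε with hDdef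
  have hDcomp : IsCompact D :=
    (isCompact_closedBall x ε).of_isClosed_subset
      (hK.inter Metric.isClosed_closedBall) Set.inter_subset_right
  have hDconv : Convex ℝ D := hconv.inter (convex_closedBall x ε)
  have hxD : x ∈ D := ⟨hx.1, Metric.mem_closedBall_self hε.le⟩
  have hxDext : x ∈ D.extremePoints ℝ :=
    inter_extremePoints_subset_extremePoints_of_subset Set.inter_subset_left ⟨hxD, hx⟩
  obtain ⟨y, hyexp, hyd⟩ := my_compact_case hDcomp hDconv hxDext hε
  refine ⟨y, ?_, hyd⟩
  obtain ⟨⟨hyK, hyB⟩, l, hl⟩ := hyexp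
  refine ⟨hyK, l, fun z hzK => ?_⟩
  by_cases hzy : z = y
  · subst hzy; exact ⟨le_refl _, fun _ => rfl⟩
  · set s : ℝ := min 1 ((ε - dist x y) / (‖z - y‖ + 1)) with hsdef
    have hzyn : (0:ℝ) < ‖z - y‖ + 1 := by positivity
    have hs0 : 0 < s := by
      refine lt_min one_pos ?_
      exact div_pos (by linarith) hzyn
    have hs1 : s ≤ 1 := min_le_left _ _
    set m := y + s • (z - y) with hmdef
    have hmK : m ∈ K := by
      have := hconv hyK hzK (by linarith : (0:ℝ) ≤ 1 - s) hs0.le (by ring)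
      convert this using 1
      rw [hmdef]
      module
    have hdistmy : dist m y ≤ ε - dist x y := by
      have h1 : dist m y = s * ‖z - y‖ := by
        rw [hmdef, dist_eq_norm, add_sub_cancel_left, norm_smul, Real.norm_eq_abs,
          abs_of_pos hs0]
      have h2 : s * ‖z - y‖ ≤ (ε - dist x y) / (‖z - y‖ + 1) * (‖z - y‖ + 1) := by
        exact mul_le_mul (min_le_right _ _) (by linarith) (norm_nonneg _)
          (div_nonneg (by linarith) hzyn.le)
      rw [div_mul_cancel₀ _ hzyn.ne'] at h2
      linarith
    have hmB : m ∈ Metric.closedBall x ε := by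
      rw [Metric.mem_closedBall, dist_comm]
      calc dist x m ≤ dist x y + dist y m := dist_triangle _ _ _
        _ ≤ dist x y + (ε - dist x y) := by rw [dist_comm y m]; linarith
        _ = ε := by ring
    have hmD : m ∈ D := ⟨hmK, hmB⟩
    have hlm : l m = l y + s * (l z - l y) := by
      rw [hmdef]
      simp only [map_add, map_smul, map_sub, smul_eq_mul]
    have h1 : l z ≤ l y := by
      have := (hl m hmD).1
      rw [hlm] at this
      nlinarith
    refine ⟨h1, fun h2 => ?_⟩
    have hlzy : l z = l y := le_antisymm h1 h2
    have hm : m = y := by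
      refine (hl m hmD).2 ?_
      rw [hlm, hlzy]
      simp
    rw [hmdef] at hm
    have : s • (z - y) = 0 := by
      have := add_eq_left.mp hm
      exact this
    rcases smul_eq_zero.mp this with h | h
    · exact absurd h hs0.ne'
    · exact absurd (sub_eq_zero.mp h) hzy

end fin_dim

lemma my_exposedPoints_image {E F : Type*} [NormedAddCommGroup E] [NormedSpace ℝ E]
    [NormedAddCommGroup F] [NormedSpace ℝ F] (e : E ≃L[ℝ] F) (A : Set E) :
    ⇑e '' (A.exposedPoints ℝ) ⊆ (⇑e '' A).exposedPoints ℝ := by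
  rintro _ ⟨x, ⟨hxA, l, hl⟩, rfl⟩
  refine ⟨Set.mem_image_of_mem _ hxA, l.comp (e.symm : F →L[ℝ] E), ?_⟩
  rintro _ ⟨a, haA, rfl⟩
  simp only [ContinuousLinearMap.comp_apply, ContinuousLinearEquiv.coe_coe,
    e.symm_apply_apply]
  exact ⟨(hl a haA).1, fun h => by rw [(hl a haA).2 h]⟩

/-- Straszewicz: for a closed convex set `K ⊆ ℝ^d`, the exposed points of `K`
are dense in the extreme points of `K`. -/
theorem stmt9 (d : ℕ) (K : Set (Fin d → ℝ)) (hK : IsClosed K) (hconv : Convex ℝ K) :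
    Set.extremePoints ℝ K ⊆ closure (Set.exposedPoints ℝ K) := by
  classical
  set e : EuclideanSpace ℝ (Fin d) ≃L[ℝ] (Fin d → ℝ) := EuclideanSpace.equiv (Fin d) ℝ with he
  set K' : Set (EuclideanSpace ℝ (Fin d)) := ⇑e ⁻¹' K with hK'
  have hKimg : ⇑e '' K' = K := Set.image_preimage_eq _ e.surjective
  have hK'cl : IsClosed K' := hK.preimage e.continuous
  have hK'conv : Convex ℝ K' :=
    hconv.linear_preimage e.toLinearEquiv.toLinearMap
  have hdense : K'.extremePoints ℝ ⊆ closure (K'.exposedPoints ℝ) := by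
    intro x hx
    rw [Metric.mem_closure_iff]
    intro ε hε
    obtain ⟨y, hy, hyd⟩ := my_closed_case hK'cl hK'conv hx hε
    exact ⟨y, hy, hyd⟩
  have hext : ⇑e '' (K'.extremePoints ℝ) = K.extremePoints ℝ := by
    rw [image_extremePoints e K', hKimg]
  intro x hxK
  obtain ⟨x', hx', rfl⟩ : x ∈ ⇑e '' (K'.extremePoints ℝ) := by rw [hext]; exact hxK
  have h1 : e x' ∈ ⇑e '' closure (K'.exposedPoints ℝ) :=
    Set.mem_image_of_mem _ (hdense hx')
  have h2 : ⇑e '' closure (K'.exposedPoints ℝ) ⊆ closure (⇑e '' (K'.exposedPoints ℝ)) :=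
    image_closure_subset_closure_image e.continuous
  refine closure_mono ?_ (h2 h1)
  calc ⇑e '' (K'.exposedPoints ℝ) ⊆ (⇑e '' K').exposedPoints ℝ := my_exposedPoints_image e K'
    _ = K.exposedPoints ℝ := by rw [hKimg]
end

section
/- Let K ⊆ D_k be a compact convex set of states. Define S^min(K) = min_{X ∈ K} S(X) and χ(K) = max over finite ensembles {(p_i, X_i)} with X_i ∈ K of [S(Σ p_i X_i) − Σ p_i S(X_i)], where S is the von Neumann entropy. If the normalized identity I/k lies in the convex hull of the set argmin_K S = {X ∈ K : S(X) = S^min(K)}, then χ(K) = log k − S^min(K). Conversely, if χ(K) = log k − S^min(K) then I/k ∈ hull(argmin_K S). -/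
open Matrix ComplexOrder

/-- The von Neumann entropy of a (Hermitian) matrix, via its eigenvalues. -/
noncomputable def vnEntropy {k : ℕ} (A : Matrix (Fin k) (Fin k) ℂ) : ℝ :=
  if h : A.IsHermitian then -∑ i, h.eigenvalues i * Real.log (h.eigenvalues i) else 0

/-- The minimum output entropy of a set of states. -/
noncomputable def Smin {k : ℕ} (K : Set (Matrix (Fin k) (Fin k) ℂ)) : ℝ :=
  sInf (vnEntropy '' K)

/-- The Holevo quantity of a set of states. -/
noncomputable def holevo {k : ℕ} (K : Set (Matrix (Fin k) (Fin k) ℂ)) : ℝ :=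
  sSup {t : ℝ | ∃ (m : ℕ) (p : Fin m → ℝ) (X : Fin m → Matrix (Fin k) (Fin k) ℂ),
    (∀ i, 0 ≤ p i) ∧ (∑ i, p i = 1) ∧ (∀ i, X i ∈ K) ∧
    t = vnEntropy (∑ i, p i • X i) - ∑ i, p i * vnEntropy (X i)}

open Polynomial Topology Filter

attribute [local instance] Matrix.normedAddCommGroup Matrix.normedSpace

/-! ### Auxiliary spectral lemmas -/

theorem trace_pow_herm {k : ℕ} {A : Matrix (Fin k) (Fin k) ℂ} (h : A.IsHermitian) (n : ℕ) :
    (A ^ n).trace = ∑ i, (h.eigenvalues i : ℂ) ^ n := by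
  set U : Matrix (Fin k) (Fin k) ℂ := (h.eigenvectorUnitary : Matrix (Fin k) (Fin k) ℂ) with hUdef
  set D : Matrix (Fin k) (Fin k) ℂ := diagonal (RCLike.ofReal ∘ h.eigenvalues) with hDdef
  have hU : U * star U = 1 := (Matrix.mem_unitaryGroup_iff).mp h.eigenvectorUnitary.2
  have hU' : star U * U = 1 := (Matrix.mem_unitaryGroup_iff').mp h.eigenvectorUnitary.2
  have key : A ^ n = U * D ^ n * star U := by
    induction n with
    | zero => rw [pow_zero, pow_zero, Matrix.mul_one, hU]
    | succ m ih =>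
      calc A ^ (m + 1) = A ^ m * A := pow_succ A m
        _ = U * D ^ m * star U * (U * D * star U) := by rw [ih]; rw [h.spectral_theorem]; simp only [Unitary.conjStarAlgAut_apply, hUdef, hDdef]
        _ = U * D ^ m * (star U * U) * D * star U := by
              simp only [Matrix.mul_assoc]
        _ = U * D ^ (m + 1) * star U := by
              rw [hU', Matrix.mul_one, pow_succ]
              simp only [Matrix.mul_assoc]
  rw [key, Matrix.trace_mul_cycle, hU', Matrix.one_mul, Matrix.diagonal_pow, Matrix.trace_diagonal]
  simp

theorem eval_sum_eig {k : ℕ} {A : Matrix (Fin k) (Fin k) ℂ} (h : A.IsHermitian) (q : ℝ[X]) :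
    ∑ i, q.eval (h.eigenvalues i) = ((Polynomial.aeval A q).trace).re := by
  induction q using Polynomial.induction_on' with
  | add p r hp hr =>
    simp only [eval_add, Finset.sum_add_distrib, map_add, Matrix.trace_add, Complex.add_re, hp, hr]
  | monomial n a =>
    rw [Polynomial.aeval_monomial]
    have : (algebraMap ℝ (Matrix (Fin k) (Fin k) ℂ)) a = (a : ℂ) • (1 : Matrix (Fin k) (Fin k) ℂ) := by
      simp [Algebra.algebraMap_eq_smul_one]
    rw [this, Matrix.smul_mul, Matrix.one_mul, Matrix.trace_smul, trace_pow_herm h n]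
    simp [Finset.mul_sum, ← Complex.ofReal_pow]

lemma vnEntropy_eq {k : ℕ} {A : Matrix (Fin k) (Fin k) ℂ} (h : A.IsHermitian) :
    vnEntropy A = ∑ i, Real.negMulLog (h.eigenvalues i) := by
  rw [vnEntropy, dif_pos h]
  simp [Real.negMulLog, neg_mul, Finset.sum_neg_distrib]

lemma sum_eig_eq_one {k : ℕ} {A : Matrix (Fin k) (Fin k) ℂ} (h : A.IsHermitian)
    (ht : A.trace = 1) : ∑ i, h.eigenvalues i = 1 := by
  have h1 := trace_pow_herm h 1
  rw [pow_one, ht] at h1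
  have h2 : ((∑ i, h.eigenvalues i : ℝ) : ℂ) = 1 := by push_cast; simpa using h1.symm
  exact_mod_cast h2

lemma eig_mem_Icc {k : ℕ} {A : Matrix (Fin k) (Fin k) ℂ} (hA : A.PosSemidef)
    (ht : A.trace = 1) (i : Fin k) : hA.1.eigenvalues i ∈ Set.Icc (0:ℝ) 1 := by
  refine ⟨hA.eigenvalues_nonneg i, ?_⟩
  rw [← sum_eig_eq_one hA.1 ht]
  exact Finset.single_le_sum (fun j _ => hA.eigenvalues_nonneg j) (Finset.mem_univ i)

lemma eig_const {k : ℕ} {c : ℝ} (h : Matrix.IsHermitian ((c:ℝ) • (1 : Matrix (Fin k) (Fin k) ℂ)))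
    (i : Fin k) : h.eigenvalues i = c := by
  set U : Matrix (Fin k) (Fin k) ℂ := (h.eigenvectorUnitary : Matrix (Fin k) (Fin k) ℂ)
  have hU' : star U * U = 1 := (Matrix.mem_unitaryGroup_iff').mp h.eigenvectorUnitary.2
  have key := h.conjStarAlgAut_star_eigenvectorUnitary
  simp only [Unitary.conjStarAlgAut_apply, Unitary.coe_star, star_star] at key
  change star U * _ * U = _ at key
  rw [Matrix.mul_smul, Matrix.smul_mul, Matrix.mul_one, hU'] at key
  have h2 := congrFun (congrFun key i) i
  simp only [Matrix.smul_apply, Matrix.one_apply_eq, Matrix.diagonal_apply_eq,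
    Function.comp_apply] at h2
  have h3 : (c : ℂ) = RCLike.ofReal (h.eigenvalues i) := by
    simpa [Complex.real_smul] using h2
  exact (RCLike.ofReal_inj.mp h3).symm

lemma diagonal_const_eq {k : ℕ} (c : ℂ) :
    Matrix.diagonal (fun _ : Fin k => c) = c • (1 : Matrix (Fin k) (Fin k) ℂ) := by
  ext i j
  by_cases hij : i = j <;> simp [Matrix.diagonal_apply, Matrix.one_apply, hij]

lemma real_smul_eq {k : ℕ} (c : ℝ) :
    (c • (1 : Matrix (Fin k) (Fin k) ℂ)) = ((c:ℂ) • (1 : Matrix (Fin k) (Fin k) ℂ)) := by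
  ext i j
  simp [Matrix.smul_apply, Complex.real_smul]

lemma vnEntropy_nonneg {k : ℕ} {A : Matrix (Fin k) (Fin k) ℂ} (hA : A.PosSemidef)
    (ht : A.trace = 1) : 0 ≤ vnEntropy A := by
  rw [vnEntropy_eq hA.1]
  exact Finset.sum_nonneg fun i _ =>
    Real.negMulLog_nonneg (eig_mem_Icc hA ht i).1 (eig_mem_Icc hA ht i).2

lemma inv_k_sum {k : ℕ} (hk : 0 < k) :
    ∑ _i : Fin k, (k:ℝ)⁻¹ = 1 := by
  simp [Finset.sum_const, Finset.card_univ]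
  field_simp

lemma vnEntropy_le_log {k : ℕ} (hk : 0 < k) {A : Matrix (Fin k) (Fin k) ℂ} (hA : A.PosSemidef)
    (ht : A.trace = 1) : vnEntropy A ≤ Real.log k := by
  have hkR : (0:ℝ) < (k:ℝ)⁻¹ := by positivity
  have jensen := Real.concaveOn_negMulLog.le_map_sum (t := Finset.univ)
    (w := fun _ : Fin k => (k:ℝ)⁻¹) (p := fun i => hA.1.eigenvalues i)
    (fun i _ => le_of_lt hkR) (inv_k_sum hk) (fun i _ => (eig_mem_Icc hA ht i).1)
  have hsum : ∑ i, (k:ℝ)⁻¹ • hA.1.eigenvalues i = (k:ℝ)⁻¹ := by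
    rw [← Finset.smul_sum, sum_eig_eq_one hA.1 ht]; simp
  rw [hsum] at jensen
  have hlog : Real.negMulLog ((k:ℝ)⁻¹) = (k:ℝ)⁻¹ * Real.log k := by
    simp [Real.negMulLog, Real.log_inv]
  rw [hlog] at jensen
  rw [vnEntropy_eq hA.1]
  have : ∑ i, (k:ℝ)⁻¹ • Real.negMulLog (hA.1.eigenvalues i)
      = (k:ℝ)⁻¹ * ∑ i, Real.negMulLog (hA.1.eigenvalues i) := by
    rw [← Finset.smul_sum]; simp
  rw [this] at jensen
  exact le_of_mul_le_mul_left jensen hkR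

lemma vnEntropy_eq_log_iff {k : ℕ} (hk : 0 < k) {A : Matrix (Fin k) (Fin k) ℂ}
    (hA : A.PosSemidef) (ht : A.trace = 1) :
    vnEntropy A = Real.log k ↔ A = (k:ℂ)⁻¹ • (1 : Matrix (Fin k) (Fin k) ℂ) := by
  have hkR : (0:ℝ) < (k:ℝ)⁻¹ := by positivity
  constructor
  · intro hE
    have hsum : ∑ i, (k:ℝ)⁻¹ • hA.1.eigenvalues i = (k:ℝ)⁻¹ := by
      rw [← Finset.smul_sum, sum_eig_eq_one hA.1 ht]; simp
    have heq : Real.negMulLog (∑ i, (k:ℝ)⁻¹ • hA.1.eigenvalues i)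
        = ∑ i, (k:ℝ)⁻¹ • Real.negMulLog (hA.1.eigenvalues i) := by
      rw [hsum, ← Finset.smul_sum]
      rw [vnEntropy_eq hA.1] at hE
      rw [hE]
      simp [Real.negMulLog, Real.log_inv]
    have := (Real.strictConcaveOn_negMulLog.map_sum_eq_iff (t := Finset.univ)
      (w := fun _ : Fin k => (k:ℝ)⁻¹) (p := fun i => hA.1.eigenvalues i)
      (fun i _ => hkR) (inv_k_sum hk) (fun i _ => (eig_mem_Icc hA ht i).1)).mp heq
    have heig : ∀ j, hA.1.eigenvalues j = (k:ℝ)⁻¹ := by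
      intro j
      have := this j (Finset.mem_univ j)
      rwa [hsum] at this
    have hfun : (RCLike.ofReal ∘ hA.1.eigenvalues : Fin k → ℂ) = fun _ => (k:ℂ)⁻¹ := by
      funext i
      rw [Function.comp_apply, heig i]
      push_cast
      simp
    have hU : (hA.1.eigenvectorUnitary : Matrix (Fin k) (Fin k) ℂ) *
        star (hA.1.eigenvectorUnitary : Matrix (Fin k) (Fin k) ℂ) = 1 :=
      (Matrix.mem_unitaryGroup_iff).mp hA.1.eigenvectorUnitary.2
    conv_lhs => rw [hA.1.spectral_theorem]
    rw [hfun, diagonal_const_eq, Unitary.conjStarAlgAut_apply, Matrix.mul_smul, Matrix.smul_mul, Matrix.mul_one, hU]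
  · intro hAeq
    subst hAeq
    have h1 : Matrix.IsHermitian (((k:ℝ)⁻¹ : ℝ) • (1 : Matrix (Fin k) (Fin k) ℂ)) := by
      rw [real_smul_eq]
      unfold Matrix.IsHermitian
      rw [Matrix.conjTranspose_smul, Matrix.conjTranspose_one]
      congr 1
      simp
    have hrw : ((k:ℂ)⁻¹ • (1 : Matrix (Fin k) (Fin k) ℂ))
        = (((k:ℝ)⁻¹ : ℝ) • (1 : Matrix (Fin k) (Fin k) ℂ)) := by
      rw [real_smul_eq]; push_cast; ring_nf
    rw [hrw, vnEntropy_eq h1]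
    have : ∀ i, h1.eigenvalues i = (k:ℝ)⁻¹ := fun i => eig_const h1 i
    simp only [this]
    rw [Finset.sum_const, Finset.card_univ]
    simp [Real.negMulLog, Real.log_inv, Fintype.card_fin]
    field_simp

lemma smulone_state {k : ℕ} (hk : 0 < k) :
    ((k:ℂ)⁻¹ • (1 : Matrix (Fin k) (Fin k) ℂ)).PosSemidef ∧
      ((k:ℂ)⁻¹ • (1 : Matrix (Fin k) (Fin k) ℂ)).trace = 1 := by
  constructor
  · rw [← diagonal_const_eq]
    rw [Matrix.posSemidef_diagonal_iff]
    intro i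
    have : ((k:ℂ)⁻¹ : ℂ) = (((k:ℝ)⁻¹ : ℝ) : ℂ) := by push_cast; ring
    rw [this]
    exact_mod_cast (by positivity : (0:ℝ) ≤ (k:ℝ)⁻¹)
  · rw [Matrix.trace_smul, Matrix.trace_one]
    have hkne : (k:ℂ) ≠ 0 := Nat.cast_ne_zero.mpr hk.ne'
    simp [hkne]

lemma vnEntropy_smul_one {k : ℕ} (hk : 0 < k) :
    vnEntropy ((k : ℂ)⁻¹ • (1 : Matrix (Fin k) (Fin k) ℂ)) = Real.log k :=
  (vnEntropy_eq_log_iff hk (smulone_state hk).1 (smulone_state hk).2).mpr rfl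

/-! ### Continuity of the entropy on the set of states -/

lemma continuous_traceAeval {k : ℕ} (q : ℝ[X]) :
    Continuous fun A : Matrix (Fin k) (Fin k) ℂ => ((Polynomial.aeval A q).trace).re := by
  have htr : Continuous fun M : Matrix (Fin k) (Fin k) ℂ => M.trace := by
    simp only [Matrix.trace, Matrix.diag]
    exact continuous_finset_sum _ fun i _ => (continuous_apply i).comp (continuous_apply i)
  exact Complex.continuous_re.comp (htr.comp q.continuous_aeval)

lemma continuousOn_vnEntropy {k : ℕ} :
    ContinuousOn vnEntropy {A : Matrix (Fin k) (Fin k) ℂ | A.PosSemidef ∧ A.trace = 1} := by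
  have hchoice : ∀ n : ℕ, ∃ q : ℝ[X],
      ∀ x ∈ Set.Icc (0:ℝ) 1, |q.eval x - Real.negMulLog x| < 1/(n+1) := fun n =>
    exists_polynomial_near_of_continuousOn 0 1 _ Real.continuous_negMulLog.continuousOn
      (1/(n+1)) (by positivity)
  choose q hq using hchoice
  have key : TendstoUniformlyOn (fun n A => ((Polynomial.aeval A (q n)).trace).re) vnEntropy
      Filter.atTop {A : Matrix (Fin k) (Fin k) ℂ | A.PosSemidef ∧ A.trace = 1} := by
    rw [Metric.tendstoUniformlyOn_iff]
    intro ε hε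
    obtain ⟨N, hN⟩ := exists_nat_gt ((k:ℝ)/ε)
    filter_upwards [Filter.eventually_ge_atTop N] with n hn
    intro A hAS
    obtain ⟨hA, ht⟩ := hAS
    rw [Real.dist_eq, vnEntropy_eq hA.1, ← eval_sum_eig hA.1, ← Finset.sum_sub_distrib]
    calc |∑ i, (Real.negMulLog (hA.1.eigenvalues i) - (q n).eval (hA.1.eigenvalues i))|
        ≤ ∑ i, |Real.negMulLog (hA.1.eigenvalues i) - (q n).eval (hA.1.eigenvalues i)| :=
          Finset.abs_sum_le_sum_abs _ _
      _ ≤ ∑ _i : Fin k, 1/((n:ℝ)+1) := by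
          refine Finset.sum_le_sum fun i _ => ?_
          rw [abs_sub_comm]
          exact le_of_lt (hq n _ (eig_mem_Icc hA ht i))
      _ = (k:ℝ)/((n:ℝ)+1) := by
          rw [Finset.sum_const, Finset.card_univ, Fintype.card_fin, nsmul_eq_mul]
          ring
      _ < ε := by
          rw [div_lt_iff₀ (by positivity)]
          have h1 : (k:ℝ) < ε * ((N:ℝ)+1) := by
            have := (div_lt_iff₀ hε).mp hN
            nlinarith [hε.le, (Nat.cast_nonneg N : (0:ℝ) ≤ N)]
          have h2 : ((N:ℝ)+1) ≤ ((n:ℝ)+1) := by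
            have : (N:ℝ) ≤ n := Nat.cast_le.mpr hn
            linarith
          nlinarith [hε]
  exact key.continuousOn (Filter.Eventually.of_forall fun n =>
    (continuous_traceAeval (q n)).continuousOn).frequently

/-! ### Compactness of the convex hull -/

lemma isCompact_convexHull_fd {E : Type*} [NormedAddCommGroup E] [NormedSpace ℝ E]
    [FiniteDimensional ℝ E] {s : Set E} (hs : IsCompact s) :
    IsCompact (convexHull ℝ s) := by
  classical
  rcases s.eq_empty_or_nonempty with rfl | ⟨x₀, hx₀⟩
  · simp
  set n := Module.finrank ℝ E + 1 with hn
  set T : Set ((Fin n → ℝ) × (Fin n → E)) :=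
    {p | p.1 ∈ stdSimplex ℝ (Fin n) ∧ ∀ i, p.2 i ∈ s} with hTdef
  have hT : IsCompact T := by
    have hTeq : T = (stdSimplex ℝ (Fin n)) ×ˢ (Set.univ.pi fun _ : Fin n => s) := by
      ext p
      simp [hTdef, Set.mem_prod, Set.mem_pi]
    rw [hTeq]
    exact (isCompact_stdSimplex (𝕜 := ℝ) (ι := Fin n)).prod (isCompact_univ_pi fun _ => hs)
  set Φ : ((Fin n → ℝ) × (Fin n → E)) → E := fun p => ∑ i, p.1 i • p.2 i with hΦdef
  have hΦ : Continuous Φ := continuous_finset_sum _ fun i _ =>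
    ((continuous_apply i).comp continuous_fst).smul ((continuous_apply i).comp continuous_snd)
  have himage : convexHull ℝ s = Φ '' T := by
    apply Set.Subset.antisymm
    · intro x hx
      obtain ⟨ι, hfin, z, w, hzs, hai, hw0, hw1, hxeq⟩ := eq_pos_convex_span_of_mem_convexHull hx
      letI := hfin
      have hcard : Fintype.card ι ≤ n := by
        refine le_trans hai.card_le_finrank_succ ?_
        have := Submodule.finrank_le (vectorSpan ℝ (Set.range z))
        omega
      obtain ⟨e⟩ : Nonempty (ι ↪ Fin n) :=
        Function.Embedding.nonempty_of_card_le (by simpa using hcard)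
      set w' : Fin n → ℝ := fun j => ∑ i ∈ Finset.univ.filter (fun i => e i = j), w i with hw'def
      set z' : Fin n → E := fun j => if h : ∃ i, e i = j then z h.choose else x₀ with hz'def
      have hz'e : ∀ i, z' (e i) = z i := by
        intro i
        have hex : ∃ i', e i' = e i := ⟨i, rfl⟩
        rw [hz'def]
        simp only [dif_pos hex]
        congr 1
        exact e.injective hex.choose_spec
      have hsum1 : ∑ j, w' j = 1 := by
        rw [hw'def, ← hw1]
        exact Finset.sum_fiberwise_of_maps_to (fun i _ => Finset.mem_univ (e i)) w
      have hsum2 : ∑ j, w' j • z' j = x := by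
        rw [← hxeq, hw'def]
        simp only [Finset.sum_smul]
        rw [← Finset.sum_fiberwise_of_maps_to (g := fun i => e i)
          (fun i _ => Finset.mem_univ (e i)) (fun i => w i • z i)]
        refine Finset.sum_congr rfl fun j _ => Finset.sum_congr rfl fun i hi => ?_
        rw [← (Finset.mem_filter.mp hi).2, hz'e]
      refine ⟨(w', z'), ⟨⟨fun j => Finset.sum_nonneg fun i _ => (hw0 i).le, hsum1⟩, ?_⟩, hsum2⟩
      intro j
      rw [hz'def]
      by_cases hex : ∃ i, e i = j
      · simp only [dif_pos hex]
        exact hzs ⟨hex.choose, rfl⟩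
      · simp only [dif_neg hex]
        exact hx₀
    · rintro _ ⟨⟨w, z⟩, ⟨hw, hz⟩, rfl⟩
      exact (convex_convexHull ℝ s).sum_mem (fun i _ => hw.1 i) hw.2
        (fun i _ => subset_convexHull ℝ s (hz i))
  rw [himage]
  exact hT.image hΦ

/-! ### Basic facts about `Smin` -/

lemma smin_bddBelow {k : ℕ} {K : Set (Matrix (Fin k) (Fin k) ℂ)}
    (hKD : K ⊆ {A | A.PosSemidef ∧ A.trace = 1}) : BddBelow (vnEntropy '' K) := by
  refine ⟨0, ?_⟩
  rintro _ ⟨A, hA, rfl⟩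
  exact vnEntropy_nonneg (hKD hA).1 (hKD hA).2

lemma smin_le {k : ℕ} {K : Set (Matrix (Fin k) (Fin k) ℂ)}
    (hKD : K ⊆ {A | A.PosSemidef ∧ A.trace = 1}) {A : Matrix (Fin k) (Fin k) ℂ}
    (hA : A ∈ K) : Smin K ≤ vnEntropy A :=
  csInf_le (smin_bddBelow hKD) ⟨A, hA, rfl⟩

/-- for a nonempty compact convex set of states `K ⊆ D_k`,
`χ(K) = log k − S^min(K)` holds if and only if `I/k` lies in the convex hull of the set of
entropy minimizers of `K`. -/
theorem stmt11 (k : ℕ) (hk : 0 < k) (K : Set (Matrix (Fin k) (Fin k) ℂ))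
    (hKD : K ⊆ {A | A.PosSemidef ∧ A.trace = 1})
    (hKcomp : IsCompact K) (hKconv : Convex ℝ K) (hKne : K.Nonempty) :
    ((k : ℂ)⁻¹ • (1 : Matrix (Fin k) (Fin k) ℂ) ∈
        convexHull ℝ {X ∈ K | vnEntropy X = Smin K}) ↔
      holevo K = Real.log k - Smin K := by
  classical
  set S : Set ℝ := {t : ℝ | ∃ (m : ℕ) (p : Fin m → ℝ) (X : Fin m → Matrix (Fin k) (Fin k) ℂ),
    (∀ i, 0 ≤ p i) ∧ (∑ i, p i = 1) ∧ (∀ i, X i ∈ K) ∧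
    t = vnEntropy (∑ i, p i • X i) - ∑ i, p i * vnEntropy (X i)} with hSdef
  have hhol_def : holevo K = sSup S := rfl
  -- upper bound
  have hub : ∀ t ∈ S, t ≤ Real.log k - Smin K := by
    rintro t ⟨m, p, X, hp0, hp1, hXK, rfl⟩
    have hY : (∑ i, p i • X i) ∈ K :=
      hKconv.sum_mem (fun i _ => hp0 i) hp1 (fun i _ => hXK i)
    have h1 : vnEntropy (∑ i, p i • X i) ≤ Real.log k :=
      vnEntropy_le_log hk (hKD hY).1 (hKD hY).2
    have h2 : Smin K ≤ ∑ i, p i * vnEntropy (X i) := by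
      calc Smin K = ∑ i, p i * Smin K := by rw [← Finset.sum_mul, hp1, one_mul]
        _ ≤ ∑ i, p i * vnEntropy (X i) :=
          Finset.sum_le_sum fun i _ =>
            mul_le_mul_of_nonneg_left (smin_le hKD (hXK i)) (hp0 i)
    linarith
  have hSne : S.Nonempty := by
    obtain ⟨A, hAK⟩ := hKne
    refine ⟨0, 1, fun _ => (1:ℝ), fun _ => A, fun _ => zero_le_one, by simp, fun _ => hAK, ?_⟩
    simp
  have hSbdd : BddAbove S := ⟨Real.log k - Smin K, hub⟩
  constructor
  · -- hull membership → holevo value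
    intro hmem
    obtain ⟨ι, hfin, z, w, hzs, hai, hw0, hw1, hxeq⟩ := eq_pos_convex_span_of_mem_convexHull hmem
    letI := hfin
    set e := Fintype.equivFin ι with hedef
    set m := Fintype.card ι
    set p : Fin m → ℝ := fun j => w (e.symm j) with hpdef
    set X : Fin m → Matrix (Fin k) (Fin k) ℂ := fun j => z (e.symm j) with hXdef
    have hsum_p : ∑ j, p j = 1 := by rw [hpdef, ← hw1]; exact Equiv.sum_comp e.symm w
    have hsum_X : ∑ j, p j • X j = (k:ℂ)⁻¹ • (1 : Matrix (Fin k) (Fin k) ℂ) := by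
      rw [← hxeq]
      exact Equiv.sum_comp e.symm (fun i => w i • z i)
    have hmemA : ∀ j, z (e.symm j) ∈ {X ∈ K | vnEntropy X = Smin K} := fun j => hzs ⟨_, rfl⟩
    have htS : (Real.log k - Smin K) ∈ S := by
      refine ⟨m, p, X, fun j => (hw0 _).le, hsum_p, fun j => (hmemA j).1, ?_⟩
      rw [hsum_X, vnEntropy_smul_one hk]
      have : ∑ j, p j * vnEntropy (X j) = Smin K := by
        have : ∀ j, p j * vnEntropy (X j) = p j * Smin K := by
          intro j
          rw [hXdef]
          simp only [(hmemA j).2]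
        rw [Finset.sum_congr rfl fun j _ => this j, ← Finset.sum_mul, hsum_p, one_mul]
      rw [this]
    rw [hhol_def]
    exact le_antisymm (csSup_le hSne hub) (le_csSup hSbdd htS)
  · -- holevo value → hull membership
    intro hhol
    by_contra hnotmem
    -- continuity of entropy on K
    have hScont : ContinuousOn vnEntropy K := continuousOn_vnEntropy.mono hKD
    -- the minimum is attained
    obtain ⟨x₀, hx₀K, hx₀min⟩ := hKcomp.exists_isMinOn hKne hScont
    have hSmin_eq : Smin K = vnEntropy x₀ := by
      refine le_antisymm (smin_le hKD hx₀K) (le_csInf ⟨_, ⟨x₀, hx₀K, rfl⟩⟩ ?_)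
      rintro _ ⟨y, hy, rfl⟩
      exact hx₀min hy
    set A₀ : Set (Matrix (Fin k) (Fin k) ℂ) := {X ∈ K | vnEntropy X = Smin K} with hA₀def
    have hx₀A₀ : x₀ ∈ A₀ := ⟨hx₀K, hSmin_eq.symm⟩
    -- A₀ is compact, so its hull is compact hence closed
    have hA₀closed : IsClosed A₀ := by
      have : A₀ = K ∩ vnEntropy ⁻¹' {Smin K} := rfl
      rw [this]
      exact hScont.preimage_isClosed_of_isClosed hKcomp.isClosed isClosed_singleton
    have hhullcomp : IsCompact (convexHull ℝ A₀) :=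
      isCompact_convexHull_fd (hKcomp.of_isClosed_subset hA₀closed fun x hx => hx.1)
    -- separation
    haveI : LocallyConvexSpace ℝ (Matrix (Fin k) (Fin k) ℂ) := NormedSpace.toLocallyConvexSpace
    haveI : FirstCountableTopology (Matrix (Fin k) (Fin k) ℂ) :=
      inferInstanceAs (FirstCountableTopology (Fin k → Fin k → ℂ))
    obtain ⟨f, u, hsep, hsep'⟩ :=
      geometric_hahn_banach_closed_point (convex_convexHull ℝ A₀) hhullcomp.isClosed hnotmem
    -- maximum of f on K
    obtain ⟨c, hcK, hcmax⟩ := hKcomp.exists_isMaxOn hKne f.continuous.continuousOn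
    -- near-optimal ensembles
    have hens : ∀ n : ℕ, ∃ (m : ℕ) (p : Fin m → ℝ)
        (X : Fin m → Matrix (Fin k) (Fin k) ℂ),
        (∀ i, 0 ≤ p i) ∧ (∑ i, p i = 1) ∧ (∀ i, X i ∈ K) ∧
        Real.log k - Smin K - 1/(n+1) <
          vnEntropy (∑ i, p i • X i) - ∑ i, p i * vnEntropy (X i) := by
      intro n
      have hlt : Real.log k - Smin K - 1/(n+1) < sSup S := by
        rw [← hhol_def, hhol]
        have : (0:ℝ) < 1/(n+1) := by positivity
        linarith
      obtain ⟨t, htS, hgt⟩ := exists_lt_of_lt_csSup hSne hlt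
      obtain ⟨m, p, X, hp0, hp1, hXK, rfl⟩ := htS
      exact ⟨m, p, X, hp0, hp1, hXK, hgt⟩
    choose em pe Xe hp0 hp1 hXK hgt using hens
    set Y : ℕ → Matrix (Fin k) (Fin k) ℂ := fun n => ∑ i, pe n i • Xe n i with hYdef
    have hYK : ∀ n, Y n ∈ K := fun n =>
      hKconv.sum_mem (fun i _ => hp0 n i) (hp1 n) (fun i _ => hXK n i)
    have hpS_ge : ∀ n, Smin K ≤ ∑ i, pe n i * vnEntropy (Xe n i) := by
      intro n
      calc Smin K = ∑ i, pe n i * Smin K := by rw [← Finset.sum_mul, hp1 n, one_mul]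
        _ ≤ _ := Finset.sum_le_sum fun i _ =>
            mul_le_mul_of_nonneg_left (smin_le hKD (hXK n i)) (hp0 n i)
    have hSY_le : ∀ n, vnEntropy (Y n) ≤ Real.log k := fun n =>
      vnEntropy_le_log hk (hKD (hYK n)).1 (hKD (hYK n)).2
    have hfactA : ∀ n, Real.log k - 1/(n+1) < vnEntropy (Y n) := by
      intro n
      have := hgt n
      have := hpS_ge n
      rw [← hYdef] at *
      linarith [hgt n, hpS_ge n]
    have hfactB : ∀ n, ∑ i, pe n i * (vnEntropy (Xe n i) - Smin K) < 1/(n+1) := by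
      intro n
      have hsplit : ∑ i, pe n i * (vnEntropy (Xe n i) - Smin K)
          = (∑ i, pe n i * vnEntropy (Xe n i)) - Smin K := by
        simp only [mul_sub]
        rw [Finset.sum_sub_distrib, ← Finset.sum_mul, hp1 n, one_mul]
      rw [hsplit]
      have := hgt n
      have := hSY_le n
      linarith [hgt n, hSY_le n]
    -- convergent subsequence of Y with limit I/k
    obtain ⟨y, hyK, φ, hφ, hYφ⟩ := hKcomp.tendsto_subseq hYK
    have hSYφ : Filter.Tendsto (fun n => vnEntropy (Y (φ n))) Filter.atTop (𝓝 (vnEntropy y)) := by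
      have h1 : Filter.Tendsto (Y ∘ φ) Filter.atTop (𝓝[K] y) :=
        tendsto_nhdsWithin_iff.mpr ⟨hYφ, Filter.Eventually.of_forall fun n => hYK (φ n)⟩
      exact ((hScont y hyK).tendsto).comp h1
    have hSy : vnEntropy y = Real.log k := by
      refine le_antisymm (vnEntropy_le_log hk (hKD hyK).1 (hKD hyK).2) ?_
      have hlow : Filter.Tendsto (fun n : ℕ => Real.log k - 1/(n+1)) Filter.atTop
          (𝓝 (Real.log k)) := by
        have h0 := tendsto_one_div_add_atTop_nhds_zero_nat (𝕜 := ℝ)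
        have := h0.const_sub (Real.log k)
        simpa using this
      refine le_of_tendsto_of_tendsto' hlow hSYφ fun n => ?_
      have h1 : Real.log k - 1/(φ n + 1) < vnEntropy (Y (φ n)) := hfactA (φ n)
      have h2 : (1:ℝ)/(φ n + 1) ≤ 1/(n+1) := by
        apply one_div_le_one_div_of_le (by positivity)
        have : (n:ℝ) ≤ φ n := Nat.cast_le.mpr (hφ.le_apply)
        linarith
      linarith
    have hyI : y = (k:ℂ)⁻¹ • (1 : Matrix (Fin k) (Fin k) ℂ) :=
      (vnEntropy_eq_log_iff hk (hKD hyK).1 (hKD hyK).2).mp hSy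
    have hfYtend : Filter.Tendsto (fun n => f (Y (φ n))) Filter.atTop
        (𝓝 (f ((k:ℂ)⁻¹ • (1 : Matrix (Fin k) (Fin k) ℂ)))) := by
      rw [← hyI]
      exact (f.continuous.tendsto y).comp hYφ
    -- for each m, a near-minimizer a with f (I/k) ≤ f a
    have hnear : ∀ m : ℕ, ∃ a ∈ K, vnEntropy a ≤ Smin K + 1/(m+1) ∧
        f ((k:ℂ)⁻¹ • (1 : Matrix (Fin k) (Fin k) ℂ)) ≤ f a := by
      intro m
      set δ : ℝ := 1/(m+1) with hδdef
      have hδpos : (0:ℝ) < δ := by positivity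
      set Aδ : Set (Matrix (Fin k) (Fin k) ℂ) := K ∩ vnEntropy ⁻¹' Set.Iic (Smin K + δ)
        with hAδdef
      have hAδcomp : IsCompact Aδ := hKcomp.of_isClosed_subset
        (hScont.preimage_isClosed_of_isClosed hKcomp.isClosed isClosed_Iic)
        fun x hx => hx.1
      have hAδne : Aδ.Nonempty := by
        refine ⟨x₀, hx₀K, ?_⟩
        simp only [Set.mem_preimage, Set.mem_Iic, ← hSmin_eq]
        linarith
      obtain ⟨a, haA, hamax⟩ := hAδcomp.exists_isMaxOn hAδne f.continuous.continuousOn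
      refine ⟨a, haA.1, haA.2, ?_⟩
      have hfca : f a ≤ f c := hcmax haA.1
      -- pointwise bound along the subsequence
      have hbound : ∀ n : ℕ, f (Y (φ n)) ≤ f a + (((m:ℝ)+1) * (f c - f a)) * (1/((n:ℝ)+1)) := by
        intro n
        set ν := φ n with hνdef
        have hsums := Finset.sum_filter_add_sum_filter_not Finset.univ
          (fun i => vnEntropy (Xe ν i) ≤ Smin K + δ) (pe ν)
        rw [hp1 ν] at hsums
        set good : Finset (Fin (em ν)) :=
          Finset.univ.filter (fun i => vnEntropy (Xe ν i) ≤ Smin K + δ) with hgooddef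
        set bad : Finset (Fin (em ν)) :=
          Finset.univ.filter (fun i => ¬ vnEntropy (Xe ν i) ≤ Smin K + δ) with hbaddef
        set b : ℝ := ∑ i ∈ bad, pe ν i with hbdef
        have hbnonneg : 0 ≤ b := Finset.sum_nonneg fun i _ => hp0 ν i
        have hgoodsum : ∑ i ∈ good, pe ν i = 1 - b := by linarith
        -- Markov bound on the bad weight
        have hbsmall : b * δ ≤ ∑ i, pe ν i * (vnEntropy (Xe ν i) - Smin K) := by
          have h1 : b * δ = ∑ i ∈ bad, pe ν i * δ := by rw [hbdef, Finset.sum_mul]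
          rw [h1]
          have h2 : ∀ i ∈ bad, pe ν i * δ ≤ pe ν i * (vnEntropy (Xe ν i) - Smin K) := by
            intro i hi
            have hbad : ¬ vnEntropy (Xe ν i) ≤ Smin K + δ := (Finset.mem_filter.mp hi).2
            push_neg at hbad
            exact mul_le_mul_of_nonneg_left (by linarith) (hp0 ν i)
          refine le_trans (Finset.sum_le_sum h2) ?_
          refine Finset.sum_le_sum_of_subset_of_nonneg (Finset.subset_univ _) ?_
          intro i _ _
          have := smin_le hKD (hXK ν i)
          exact mul_nonneg (hp0 ν i) (by linarith)
        have hm1 : (0:ℝ) < (m:ℝ)+1 := by positivity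
        have hν1 : (0:ℝ) < (ν:ℝ)+1 := by positivity
        have hbineq : b < ((m:ℝ)+1)/((ν:ℝ)+1) := by
          have h4 : b * δ < 1/((ν:ℝ)+1) := lt_of_le_of_lt hbsmall (hfactB ν)
          rw [hδdef] at h4
          rw [lt_div_iff₀ hν1]
          calc b * ((ν:ℝ)+1) = (b * (1/((m:ℝ)+1))) * (((m:ℝ)+1) * ((ν:ℝ)+1)) := by
                field_simp
            _ < (1/((ν:ℝ)+1)) * (((m:ℝ)+1) * ((ν:ℝ)+1)) :=
                mul_lt_mul_of_pos_right h4 (by positivity)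
            _ = ((m:ℝ)+1) := by field_simp
        have hfY : f (Y ν) = ∑ i, pe ν i * f (Xe ν i) := by
          simp only [hYdef, _root_.map_sum, _root_.map_smul, smul_eq_mul]
        have hsplitf : f (Y ν) ≤ (1-b) * f a + b * f c := by
          rw [hfY, ← Finset.sum_filter_add_sum_filter_not Finset.univ
            (fun i => vnEntropy (Xe ν i) ≤ Smin K + δ) (fun i => pe ν i * f (Xe ν i))]
          have hgood1 : ∑ i ∈ good, pe ν i * f (Xe ν i) ≤ (1-b) * f a := by
            rw [← hgoodsum, Finset.sum_mul]
            refine Finset.sum_le_sum fun i hi => ?_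
            have hiA : Xe ν i ∈ Aδ := ⟨hXK ν i, (Finset.mem_filter.mp hi).2⟩
            exact mul_le_mul_of_nonneg_left (hamax hiA) (hp0 ν i)
          have hbad1 : ∑ i ∈ bad, pe ν i * f (Xe ν i) ≤ b * f c := by
            rw [hbdef, Finset.sum_mul]
            refine Finset.sum_le_sum fun i hi => ?_
            exact mul_le_mul_of_nonneg_left (hcmax (hXK ν i)) (hp0 ν i)
          have hgeq : (Finset.univ.filter (fun i => vnEntropy (Xe ν i) ≤ Smin K + δ)) = good :=
            rfl
          have hbeq : (Finset.univ.filter (fun i => ¬ vnEntropy (Xe ν i) ≤ Smin K + δ)) = bad :=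
            rfl
          rw [hgeq, hbeq]
          linarith
        have hb2 : b ≤ ((m:ℝ)+1) * (1/((n:ℝ)+1)) := by
          have hν : (n:ℝ) ≤ (ν:ℝ) := Nat.cast_le.mpr hφ.le_apply
          have : ((m:ℝ)+1)/((ν:ℝ)+1) ≤ ((m:ℝ)+1)/((n:ℝ)+1) := by
            apply div_le_div_of_nonneg_left (by positivity) (by positivity) (by linarith)
          calc b ≤ ((m:ℝ)+1)/((ν:ℝ)+1) := hbineq.le
            _ ≤ ((m:ℝ)+1)/((n:ℝ)+1) := this
            _ = ((m:ℝ)+1) * (1/((n:ℝ)+1)) := by ring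
        calc f (Y ν) ≤ (1-b) * f a + b * f c := hsplitf
          _ = f a + b * (f c - f a) := by ring
          _ ≤ f a + (((m:ℝ)+1) * (1/((n:ℝ)+1))) * (f c - f a) := by
              have := mul_le_mul_of_nonneg_right hb2 (by linarith : (0:ℝ) ≤ f c - f a)
              linarith
          _ = f a + (((m:ℝ)+1) * (f c - f a)) * (1/((n:ℝ)+1)) := by ring
      have hRtend : Filter.Tendsto
          (fun n : ℕ => f a + (((m:ℝ)+1) * (f c - f a)) * (1/((n:ℝ)+1)))
          Filter.atTop (𝓝 (f a)) := by
        have h0 := tendsto_one_div_add_atTop_nhds_zero_nat (𝕜 := ℝ)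
        have h1 := h0.const_mul (((m:ℝ)+1) * (f c - f a))
        have h2 := h1.const_add (f a)
        simpa using h2
      exact le_of_tendsto_of_tendsto' hfYtend hRtend hbound
    choose a haK haS hafI using hnear
    obtain ⟨w, hwK, ψ, hψ, haψ⟩ := hKcomp.tendsto_subseq haK
    have hSaψ : Filter.Tendsto (fun n => vnEntropy (a (ψ n))) Filter.atTop
        (𝓝 (vnEntropy w)) := by
      have h1 : Filter.Tendsto (a ∘ ψ) Filter.atTop (𝓝[K] w) :=
        tendsto_nhdsWithin_iff.mpr ⟨haψ, Filter.Eventually.of_forall fun n => haK (ψ n)⟩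
      exact ((hScont w hwK).tendsto).comp h1
    have hSw_le : vnEntropy w ≤ Smin K := by
      have hupper : Filter.Tendsto (fun n : ℕ => Smin K + 1/(n+1)) Filter.atTop
          (𝓝 (Smin K)) := by
        have h0 := tendsto_one_div_add_atTop_nhds_zero_nat (𝕜 := ℝ)
        have := h0.const_add (Smin K)
        simpa using this
      refine le_of_tendsto_of_tendsto' hSaψ hupper fun n => ?_
      have h1 := haS (ψ n)
      have h2 : (1:ℝ)/(ψ n + 1) ≤ 1/(n+1) := by
        apply one_div_le_one_div_of_le (by positivity)
        have : (n:ℝ) ≤ ψ n := Nat.cast_le.mpr (hψ.le_apply)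
        linarith
      linarith
    have hSw : vnEntropy w = Smin K := le_antisymm hSw_le (smin_le hKD hwK)
    have hwA₀ : w ∈ A₀ := ⟨hwK, hSw⟩
    have hfw : f ((k:ℂ)⁻¹ • (1 : Matrix (Fin k) (Fin k) ℂ)) ≤ f w := by
      have hfaψ : Filter.Tendsto (fun n => f (a (ψ n))) Filter.atTop (𝓝 (f w)) :=
        (f.continuous.tendsto w).comp haψ
      exact ge_of_tendsto' hfaψ fun n => hafI (ψ n)
    have hcontra := hsep w (subset_convexHull ℝ A₀ hwA₀)
    linarith
end

section
/- Let Φ : M_N → M_k be an entanglement-breaking channel of the form Φ(X) = Σ_{i=1}^l Tr[X M_i] σ_i, where (M_i) is a POVM (positive operators summing to I_N) with ‖M_i‖_∞ = 1 for each i, and σ_i ∈ D_k are fixed states. Then for every state A ∈ D_k, the largest eigenvalue of the adjoint Φ*(A) = Σ_i Tr[A σ_i] M_i equals f(A) := max_{1 ≤ i ≤ l} Tr[A σ_i], and this eigenvalue has multiplicity at least min_i dim ker(M_i − I). -/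
open Matrix ComplexOrder

lemma stmt13_psd_smul {n : ℕ} {c : ℂ} (hc : 0 ≤ c) {M : Matrix (Fin n) (Fin n) ℂ}
    (hM : M.PosSemidef) : (c • M).PosSemidef := by
  have hstar : star c = c := by
    rw [Complex.star_def, Complex.conj_eq_iff_im]
    exact ((Complex.le_def.mp hc).2).symm
  rw [posSemidef_iff_dotProduct_mulVec]
  constructor
  · unfold Matrix.IsHermitian
    rw [conjTranspose_smul, hM.1, hstar]
  · intro x
    rw [smul_mulVec, dotProduct_smul, smul_eq_mul]
    exact mul_nonneg hc (hM.dotProduct_mulVec_nonneg x)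

lemma stmt13_psd_add {n : ℕ} {M N : Matrix (Fin n) (Fin n) ℂ}
    (hM : M.PosSemidef) (hN : N.PosSemidef) : (M + N).PosSemidef := by
  refine PosSemidef.of_dotProduct_mulVec_nonneg (hM.1.add hN.1) fun x => ?_
  rw [add_mulVec, dotProduct_add]
  exact add_nonneg (hM.dotProduct_mulVec_nonneg x) (hN.dotProduct_mulVec_nonneg x)

lemma stmt13_psd_trace_nonneg {n : ℕ} {M : Matrix (Fin n) (Fin n) ℂ}
    (hM : M.PosSemidef) : 0 ≤ M.trace := by
  rw [Matrix.trace]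
  refine Finset.sum_nonneg fun i _ => ?_
  have := hM.dotProduct_mulVec_nonneg (Pi.single i 1)
  simpa [dotProduct, mulVec, Pi.single_apply, Finset.sum_ite_eq, Matrix.diag] using this

lemma stmt13_sum_mulVec {ι n : Type*} [Fintype n] (s : Finset ι)
    (g : ι → Matrix n n ℂ) (v : n → ℂ) :
    (∑ i ∈ s, g i) *ᵥ v = ∑ i ∈ s, g i *ᵥ v := by
  classical
  induction s using Finset.cons_induction with
  | empty => simp
  | cons a s ha ih => simp [Finset.sum_insert ha, add_mulVec, ih]

lemma stmt13_dot_sum {ι n : Type*} [Fintype n] (s : Finset ι)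
    (u : n → ℂ) (w : ι → n → ℂ) :
    u ⬝ᵥ ∑ i ∈ s, w i = ∑ i ∈ s, u ⬝ᵥ w i := by
  classical
  induction s using Finset.cons_induction with
  | empty => simp
  | cons a s ha ih => simp [Finset.sum_insert ha, dotProduct_add, ih]

lemma stmt13_trace_mul_nonneg {k : ℕ} {A B : Matrix (Fin k) (Fin k) ℂ}
    (hA : A.PosSemidef) (hB : B.PosSemidef) : 0 ≤ (A * B).trace := by
  obtain ⟨C, rfl⟩ : ∃ C : Matrix (Fin k) (Fin k) ℂ, A = Cᴴ * C := by
    open scoped MatrixOrder in exact CStarAlgebra.nonneg_iff_eq_star_mul_self.mp hA.nonneg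
  rw [Matrix.mul_assoc, Matrix.trace_mul_comm]
  exact stmt13_psd_trace_nonneg (hB.mul_mul_conjTranspose_same C)

/-- for an entanglement-breaking channel `Φ(X) = ∑ Tr[X M_i] σ_i` with POVM
`(M_i)` satisfying `‖M_i‖_∞ = 1` (i.e. each `M_i` has eigenvalue 1), and any state `A`,
the largest eigenvalue of `Φ*(A) = ∑ Tr[A σ_i] M_i` equals `f(A) = max_i Tr[A σ_i]`
(i.e. `Φ*(A) ≤ f(A)·I` and `f(A)` is attained), with multiplicity at least
`min_i dim ker(M_i − I)`. -/
theorem stmt13 (N k l : ℕ) (hl : 0 < l)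
    (M : Fin l → Matrix (Fin N) (Fin N) ℂ)
    (hMpos : ∀ i, (M i).PosSemidef) (hMsum : ∑ i, M i = 1)
    (hMnorm : ∀ i, ∃ v : Fin N → ℂ, v ≠ 0 ∧ (M i) *ᵥ v = v)
    (σ : Fin l → Matrix (Fin k) (Fin k) ℂ)
    (hσ : ∀ i, (σ i).PosSemidef ∧ (σ i).trace = 1)
    (A : Matrix (Fin k) (Fin k) ℂ) (hA : A.PosSemidef ∧ A.trace = 1)
    (f : ℝ)
    (hf : f = Finset.univ.sup' (Finset.univ_nonempty_iff.mpr (Fin.pos_iff_nonempty.mp hl))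
      (fun i => (Matrix.trace (A * σ i)).re))
    (T : Matrix (Fin N) (Fin N) ℂ)
    (hT : T = ∑ i, Matrix.trace (A * σ i) • M i) :
    ((f : ℂ) • (1 : Matrix (Fin N) (Fin N) ℂ) - T).PosSemidef ∧
    Finset.univ.inf' (Finset.univ_nonempty_iff.mpr (Fin.pos_iff_nonempty.mp hl))
        (fun i => Module.finrank ℂ (LinearMap.ker (Matrix.toLin' (M i - 1)))) ≤
      Module.finrank ℂ (LinearMap.ker (Matrix.toLin' (T - (f : ℂ) • 1))) := by
  classical
  set c : Fin l → ℂ := fun i => Matrix.trace (A * σ i) with hc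
  have hcpos : ∀ i, 0 ≤ c i := fun i => stmt13_trace_mul_nonneg hA.1 (hσ i).1
  have hcre : ∀ i, c i = ((c i).re : ℂ) := by
    intro i
    have him := (Complex.le_def.mp (hcpos i)).2
    exact Complex.ext rfl him.symm
  have hfle : ∀ i, (c i).re ≤ f := by
    intro i
    rw [hf]
    exact Finset.le_sup' (fun i => (Matrix.trace (A * σ i)).re) (Finset.mem_univ i)
  -- part 1
  have hdiff : (f : ℂ) • (1 : Matrix (Fin N) (Fin N) ℂ) - T
      = ∑ i, ((f : ℂ) - c i) • M i := by
    rw [hT, ← hMsum, Finset.smul_sum, ← Finset.sum_sub_distrib]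
    simp [sub_smul, hc]
  have hpart1 : ((f : ℂ) • (1 : Matrix (Fin N) (Fin N) ℂ) - T).PosSemidef := by
    rw [hdiff]
    refine Finset.sum_induction _ _ (fun a b => stmt13_psd_add)
      ⟨isHermitian_zero, by simp⟩ (fun i _ => stmt13_psd_smul ?_ (hMpos i))
    rw [hcre i, ← Complex.ofReal_sub]
    exact_mod_cast sub_nonneg.mpr (hfle i)
  refine ⟨hpart1, ?_⟩
  -- part 2
  obtain ⟨j, -, hj⟩ := Finset.exists_mem_eq_sup' (Finset.univ_nonempty_iff.mpr
    (Fin.pos_iff_nonempty.mp hl)) (fun i => (Matrix.trace (A * σ i)).re)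
  have hcj : c j = (f : ℂ) := by
    rw [hcre j, hf, hj]
  have hker : LinearMap.ker (Matrix.toLin' (M j - 1)) ≤
      LinearMap.ker (Matrix.toLin' (T - (f : ℂ) • 1)) := by
    intro v hv
    rw [LinearMap.mem_ker, Matrix.toLin'_apply] at hv ⊢
    rw [sub_mulVec, one_mulVec, sub_eq_zero] at hv
    rw [sub_mulVec, smul_mulVec, one_mulVec, sub_eq_zero]
    have hvv : M j *ᵥ v = v := hv
    have hsum : ∑ i, M i *ᵥ v = v := by
      rw [← stmt13_sum_mulVec, hMsum, one_mulVec]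
    have hrest : ∑ i ∈ Finset.univ.erase j, M i *ᵥ v = 0 := by
      have h1 := Finset.add_sum_erase Finset.univ (fun i => M i *ᵥ v) (Finset.mem_univ j)
      rw [hsum] at h1
      have h2 : v + ∑ i ∈ Finset.univ.erase j, M i *ᵥ v = v := by
        simpa [hvv] using h1
      exact add_eq_left.mp h2
    have hzero : ∀ i ∈ Finset.univ.erase j, M i *ᵥ v = 0 := by
      have hdsum : ∑ i ∈ Finset.univ.erase j, star v ⬝ᵥ M i *ᵥ v = 0 := by
        rw [← stmt13_dot_sum, hrest, dotProduct_zero]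
      intro i hi
      have hallnn : ∀ i ∈ Finset.univ.erase j, 0 ≤ star v ⬝ᵥ M i *ᵥ v :=
        fun i _ => (hMpos i).dotProduct_mulVec_nonneg v
      have := (Finset.sum_eq_zero_iff_of_nonneg hallnn).mp hdsum i hi
      exact ((hMpos i).dotProduct_mulVec_zero_iff v).mp this
    have hTv : T *ᵥ v = (f : ℂ) • v := by
      rw [hT, stmt13_sum_mulVec]
      rw [← Finset.add_sum_erase Finset.univ _ (Finset.mem_univ j)]
      rw [Finset.sum_eq_zero (fun i hi => by
        rw [smul_mulVec, hzero i hi, smul_zero])]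
      rw [smul_mulVec, hvv, add_zero]
      exact congrArg (fun z : ℂ => z • v) hcj
    exact hTv
  have hfd : Module.finrank ℂ (LinearMap.ker (Matrix.toLin' (M j - 1))) ≤
      Module.finrank ℂ (LinearMap.ker (Matrix.toLin' (T - (f : ℂ) • 1))) :=
    Submodule.finrank_mono hker
  exact le_trans (Finset.inf'_le _ (Finset.mem_univ j)) hfd
end

section
/- Let Ξ(X) = Σ_{i=1}^l Tr[X M_i] σ_i be an entanglement-breaking channel with ‖M_i‖_∞ = 1 for every i, and let Ψ be any quantum channel with output set K_Ψ = Ψ(D_N). Then the output set of Ξ ⊗ Ψ equals the convex hull of simple tensors: K_{Ξ⊗Ψ} = hull{ σ ⊗ ρ : σ ∈ K_Ξ, ρ ∈ K_Ψ }, where K_Ξ = { Σ_i p_i σ_i : (p_i) a probability vector }. -/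
open Matrix Kronecker ComplexOrder

/-- The Choi matrix of a linear map on matrices; positivity of the Choi matrix is
equivalent to complete positivity (Choi's theorem). -/
noncomputable def choiMatrix {N k' : ℕ}
    (Ψ : Matrix (Fin N) (Fin N) ℂ →ₗ[ℂ] Matrix (Fin k') (Fin k') ℂ) :
    Matrix (Fin N × Fin k') (Fin N × Fin k') ℂ :=
  Matrix.of fun p q => Ψ (Matrix.single p.1 q.1 1) p.2 q.2

/-- The channel `Ξ ⊗ Ψ` on `M_N ⊗ M_p`, where `Ξ(X) = ∑ Tr[X M_i] σ_i` is an
entanglement-breaking channel acting on the second factor `ℂ^p` and `Ψ` acts on the first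
factor `ℂ^N`; the output lies in `M_k ⊗ M_{k'}`. -/
noncomputable def tensorEB {N p k k' l : ℕ}
    (σ : Fin l → Matrix (Fin k) (Fin k) ℂ) (M : Fin l → Matrix (Fin p) (Fin p) ℂ)
    (Ψ : Matrix (Fin N) (Fin N) ℂ →ₗ[ℂ] Matrix (Fin k') (Fin k') ℂ)
    (ρ : Matrix (Fin N × Fin p) (Fin N × Fin p) ℂ) :
    Matrix (Fin k × Fin k') (Fin k × Fin k') ℂ :=
  ∑ i, (σ i) ⊗ₖ Ψ (Matrix.of fun s t => ∑ u, ∑ v, ρ (s, u) (t, v) * M i v u)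


namespace Stmt16
variable {n N p : ℕ}


lemma rsmul (a : ℝ) {α β : Type*} [Fintype α] [Fintype β] (X : Matrix α β ℂ) :
    a • X = (a : ℂ) • X := (algebraMap_smul ℂ a X).symm

lemma psd_smul {m : Type*} [Fintype m] {A : Matrix m m ℂ} (hA : A.PosSemidef) {r : ℝ} (hr : 0 ≤ r) :
    ((r : ℂ) • A).PosSemidef := by
  refine Matrix.PosSemidef.of_dotProduct_mulVec_nonneg ?_ ?_
  · unfold Matrix.IsHermitian
    rw [conjTranspose_smul, hA.1]
    norm_num
  · intro x
    rw [smul_mulVec, dotProduct_smul, smul_eq_mul]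
    exact mul_nonneg (by exact_mod_cast hr) (hA.dotProduct_mulVec_nonneg x)

lemma psd_sum {m : Type*} [Fintype m] {ι : Type*} [Fintype ι] (f : ι → Matrix m m ℂ)
    (h : ∀ i, (f i).PosSemidef) : (∑ i, f i).PosSemidef :=
  Finset.sum_induction f _ (fun _ _ ha hb => ha.add hb) .zero (fun i _ => h i)

lemma psd_eq_star_mul {m : Type*} [Fintype m] [DecidableEq m] {A : Matrix m m ℂ}
    (hA : A.PosSemidef) : ∃ B : Matrix m m ℂ, A = Bᴴ * B := by
  open MatrixOrder in
  obtain ⟨X, hX, -, hXA⟩ :=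
    CFC.exists_sqrt_of_isSelfAdjoint_of_quasispectrumRestricts hA.isHermitian
      (QuasispectrumRestricts.nnreal_of_nonneg (sub_zero A ▸ hA.nonneg))
  refine ⟨X, ?_⟩
  rw [← hXA]
  show X * X = star X * X
  rw [hX.star_eq]

lemma psd_trace_aux {m : Type*} [Fintype m] [DecidableEq m] {A : Matrix m m ℂ} (hA : A.PosSemidef) :
    ∃ t : ℝ, 0 ≤ t ∧ A.trace = (t : ℂ) ∧ (t = 0 → A = 0) := by
  obtain ⟨B, rfl⟩ := psd_eq_star_mul hA
  refine ⟨∑ u, ∑ c, Complex.normSq (B c u),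
    Finset.sum_nonneg fun u _ => Finset.sum_nonneg fun c _ => Complex.normSq_nonneg _, ?_, ?_⟩
  · rw [Matrix.trace]
    push_cast
    refine Finset.sum_congr rfl fun u _ => ?_
    simp only [Matrix.diag_apply, Matrix.mul_apply, Matrix.conjTranspose_apply]
    refine Finset.sum_congr rfl fun c _ => ?_
    rw [Complex.normSq_eq_conj_mul_self, Complex.star_def]
  · intro h
    have hB : B = 0 := by
      ext c u
      have h1 : ∀ u ∈ Finset.univ, (0:ℝ) ≤ ∑ c, Complex.normSq (B c u) :=
        fun u _ => Finset.sum_nonneg fun c _ => Complex.normSq_nonneg _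
      have h2 := (Finset.sum_eq_zero_iff_of_nonneg h1).mp h u (Finset.mem_univ u)
      have h3 : ∀ c ∈ Finset.univ, (0:ℝ) ≤ Complex.normSq (B c u) :=
        fun c _ => Complex.normSq_nonneg _
      have := (Finset.sum_eq_zero_iff_of_nonneg h3).mp h2 c (Finset.mem_univ c)
      simpa [Complex.normSq_eq_zero] using this
    rw [hB]; simp

noncomputable def pA (M : Matrix (Fin p) (Fin p) ℂ)
    (ρ : Matrix (Fin N × Fin p) (Fin N × Fin p) ℂ) : Matrix (Fin N) (Fin N) ℂ :=
  Matrix.of fun s t => ∑ u, ∑ v, ρ (s, u) (t, v) * M v u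

noncomputable def J (w : Fin p → ℂ) : Matrix (Fin N × Fin p) (Fin N) ℂ :=
  Matrix.of fun x t => if x.1 = t then w x.2 else 0

lemma pA_eq_sum (B : Matrix (Fin p) (Fin p) ℂ) (ρ : Matrix (Fin N × Fin p) (Fin N × Fin p) ℂ) :
    pA (Bᴴ * B) ρ = ∑ c, (J (N := N) (fun u => star (B c u)))ᴴ * ρ * J (N := N) (fun u => star (B c u)) := by
  ext s t
  simp only [pA, Matrix.of_apply, Matrix.sum_apply, Matrix.mul_apply,
    Matrix.conjTranspose_apply, J, Fintype.sum_prod_type, apply_ite (star : ℂ → ℂ),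
    star_star, star_zero, ite_mul, zero_mul, mul_ite, mul_zero, Finset.sum_ite_eq,
    Finset.sum_ite_eq', Finset.mem_univ, if_true]
  simp only [Finset.sum_ite_irrel, Finset.sum_const_zero, Finset.sum_ite_eq,
    Finset.sum_ite_eq', Finset.mem_univ, if_true]
  simp only [Finset.mul_sum, Finset.sum_mul]
  conv_lhs => rw [Finset.sum_comm]
  conv_lhs => enter [2, b]; rw [Finset.sum_comm]
  conv_lhs => rw [Finset.sum_comm]
  refine Finset.sum_congr rfl fun c _ => ?_
  refine Finset.sum_congr rfl fun b _ => ?_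
  refine Finset.sum_congr rfl fun a _ => ?_
  ring

lemma pA_posSemidef {M : Matrix (Fin p) (Fin p) ℂ} {ρ : Matrix (Fin N × Fin p) (Fin N × Fin p) ℂ}
    (hM : M.PosSemidef) (hρ : ρ.PosSemidef) : (pA M ρ).PosSemidef := by
  obtain ⟨B, rfl⟩ := psd_eq_star_mul hM
  rw [pA_eq_sum]
  exact Finset.sum_induction _ _ (fun _ _ ha hb => ha.add hb) .zero
    (fun c _ => hρ.conjTranspose_mul_mul_same _)

lemma pA_add (M : Matrix (Fin p) (Fin p) ℂ) (ρ₁ ρ₂ : Matrix (Fin N × Fin p) (Fin N × Fin p) ℂ) :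
    pA M (ρ₁ + ρ₂) = pA M ρ₁ + pA M ρ₂ := by
  ext s t
  simp [pA, add_mul, Finset.sum_add_distrib]

lemma pA_smul (M : Matrix (Fin p) (Fin p) ℂ) (c : ℂ) (ρ : Matrix (Fin N × Fin p) (Fin N × Fin p) ℂ) :
    pA M (c • ρ) = c • pA M ρ := by
  ext s t
  simp [pA, Finset.mul_sum, mul_assoc]

lemma pA_sum {ι : Type*} [Fintype ι] (M : Matrix (Fin p) (Fin p) ℂ)
    (f : ι → Matrix (Fin N × Fin p) (Fin N × Fin p) ℂ) :
    pA M (∑ j, f j) = ∑ j, pA M (f j) := by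
  ext s t
  simp only [pA, Matrix.sum_apply, Matrix.of_apply, Finset.sum_mul]
  conv_lhs => enter [2, u]; rw [Finset.sum_comm]
  rw [Finset.sum_comm]

lemma pA_kron (M : Matrix (Fin p) (Fin p) ℂ) (A : Matrix (Fin N) (Fin N) ℂ) (w : Fin p → ℂ) :
    pA M (A ⊗ₖ vecMulVec w (star w)) = (star w ⬝ᵥ M *ᵥ w) • A := by
  ext s t
  simp only [pA, Matrix.of_apply, kroneckerMap_apply, vecMulVec_apply, Pi.star_apply,
    Matrix.smul_apply, dotProduct, mulVec, smul_eq_mul]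
  simp only [Finset.sum_mul, Finset.mul_sum]
  rw [Finset.sum_comm]
  refine Finset.sum_congr rfl fun v _ => ?_
  refine Finset.sum_congr rfl fun u _ => ?_
  ring

lemma trace_pA_sum {l : ℕ} (M : Fin l → Matrix (Fin p) (Fin p) ℂ) (hMsum : ∑ i, M i = 1)
    (ρ : Matrix (Fin N × Fin p) (Fin N × Fin p) ℂ) :
    ∑ i, (pA (M i) ρ).trace = ρ.trace := by
  simp only [Matrix.trace, Matrix.diag_apply, pA, Matrix.of_apply]
  rw [Fintype.sum_prod_type]
  rw [Finset.sum_comm]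
  refine Finset.sum_congr rfl fun s _ => ?_
  rw [Finset.sum_comm]
  refine Finset.sum_congr rfl fun u _ => ?_
  rw [Finset.sum_comm]
  have h : ∀ v, ∑ i, ρ (s,u) (s,v) * M i v u = ρ (s,u) (s,v) * (if v = u then 1 else 0) := by
    intro v
    rw [← Finset.mul_sum]
    congr 1
    have h2 := congrFun (congrFun hMsum v) u
    simpa [Matrix.sum_apply, Matrix.one_apply] using h2
  simp only [h, mul_ite, mul_one, mul_zero, Finset.sum_ite_eq, Finset.sum_ite_eq', Finset.mem_univ, if_true]

lemma kron_psd {A : Matrix (Fin N) (Fin N) ℂ} (hA : A.PosSemidef) (w : Fin p → ℂ) :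
    (A ⊗ₖ vecMulVec w (star w)).PosSemidef := by
  refine Matrix.PosSemidef.of_dotProduct_mulVec_nonneg ?_ ?_
  · ext ⟨s,u⟩ ⟨t,v⟩
    have h := congrFun (congrFun hA.1 s) t
    simp only [Matrix.conjTranspose_apply, kroneckerMap_apply, vecMulVec_apply,
      Pi.star_apply, star_mul', star_star] at h ⊢
    rw [h]
    ring
  · intro x
    have key : star x ⬝ᵥ (A ⊗ₖ vecMulVec w (star w)) *ᵥ x
        = star (fun t => ∑ v, x (t, v) * star (w v)) ⬝ᵥ
            A *ᵥ (fun t => ∑ v, x (t, v) * star (w v)) := by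
      simp only [dotProduct, mulVec, kroneckerMap_apply, vecMulVec_apply, Pi.star_apply,
        Fintype.sum_prod_type, star_sum, star_mul', star_star, Finset.sum_mul,
        Finset.mul_sum]
      conv_lhs => enter [2, s]; rw [Finset.sum_comm]; enter [2, t]; rw [Finset.sum_comm]
      refine Finset.sum_congr rfl fun s _ => ?_
      refine Finset.sum_congr rfl fun t _ => ?_
      refine Finset.sum_congr rfl fun v _ => ?_
      refine Finset.sum_congr rfl fun u _ => ?_
      ring
    rw [key]; exact hA.dotProduct_mulVec_nonneg _

lemma sum_kron {k k' : ℕ} {ι : Type*} [Fintype ι] (f : ι → Matrix (Fin k) (Fin k) ℂ)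
    (B : Matrix (Fin k') (Fin k') ℂ) : (∑ i, f i) ⊗ₖ B = ∑ i, (f i) ⊗ₖ B := by
  ext ⟨a,b⟩ ⟨c,d⟩
  simp [kroneckerMap_apply, Matrix.sum_apply, Finset.sum_mul]

lemma trace_vvmul (w : Fin p → ℂ) :
    (vecMulVec w (star w)).trace = ((∑ u, Complex.normSq (w u) : ℝ) : ℂ) := by
  simp only [Matrix.trace, Matrix.diag_apply, vecMulVec_apply, Pi.star_apply]
  push_cast
  refine Finset.sum_congr rfl fun u _ => ?_
  rw [Complex.star_def, mul_comm, Complex.normSq_eq_conj_mul_self]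

lemma diag_single_psd (i0 : Fin N) : (Matrix.diagonal (Pi.single i0 (1:ℂ))).PosSemidef := by
  refine Matrix.PosSemidef.diagonal ?_
  intro a
  rcases eq_or_ne a i0 with rfl | h
  · simp
  · simp [Pi.single_apply, h]

lemma diag_single_trace (i0 : Fin N) : (Matrix.diagonal (Pi.single i0 (1:ℂ))).trace = 1 := by
  simp [Matrix.trace_diagonal]

end Stmt16


/-- if `Ξ(X) = ∑ Tr[X M_i] σ_i` is entanglement-breaking with
`‖M_i‖_∞ = 1` for all `i` (each `M_i` has eigenvalue 1), and `Ψ` is any quantum channel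
with output set `K_Ψ = Ψ(D_N)`, then the output set of `Ξ ⊗ Ψ` equals the convex hull of
simple tensors `σ ⊗ ρ` with `σ ∈ K_Ξ = hull{σ_i}` and `ρ ∈ K_Ψ`. -/
theorem stmt16 (N p k k' l : ℕ)
    (M : Fin l → Matrix (Fin p) (Fin p) ℂ)
    (hMpos : ∀ i, (M i).PosSemidef) (hMsum : ∑ i, M i = 1)
    (hMnorm : ∀ i, ∃ v : Fin p → ℂ, v ≠ 0 ∧ (M i) *ᵥ v = v)
    (σ : Fin l → Matrix (Fin k) (Fin k) ℂ)
    (hσ : ∀ i, (σ i).PosSemidef ∧ (σ i).trace = 1)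
    (Ψ : Matrix (Fin N) (Fin N) ℂ →ₗ[ℂ] Matrix (Fin k') (Fin k') ℂ)
    (hΨCP : (choiMatrix Ψ).PosSemidef)
    (hΨTP : ∀ ρ, (Ψ ρ).trace = ρ.trace) :
    {X | ∃ ρ : Matrix (Fin N × Fin p) (Fin N × Fin p) ℂ, ρ.PosSemidef ∧ ρ.trace = 1 ∧
        X = tensorEB σ M Ψ ρ} =
      convexHull ℝ {X | ∃ (pr : Fin l → ℝ) (ρ : Matrix (Fin N) (Fin N) ℂ),
        (∀ i, 0 ≤ pr i) ∧ (∑ i, pr i = 1) ∧ ρ.PosSemidef ∧ ρ.trace = 1 ∧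
        X = (∑ i, pr i • σ i) ⊗ₖ Ψ ρ} := by
  classical
  apply Set.Subset.antisymm
  · -- output set ⊆ convex hull
    rintro X ⟨ρ, hρ, htr, rfl⟩
    choose t ht0 htrA hzero using
      fun i => Stmt16.psd_trace_aux (Stmt16.pA_posSemidef (hMpos i) hρ)
    have hsumt : ∑ i, t i = 1 := by
      have h1 := Stmt16.trace_pA_sum M hMsum ρ
      rw [htr] at h1
      have h2 : ((∑ i, t i : ℝ) : ℂ) = 1 := by
        push_cast
        rw [← h1]
        exact Finset.sum_congr rfl fun i _ => (htrA i).symm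
      exact_mod_cast h2
    have hN : N ≠ 0 := by
      rintro rfl
      rw [Matrix.trace, Finset.univ_eq_empty, Finset.sum_empty] at htr
      exact one_ne_zero htr.symm
    set i0 : Fin N := ⟨0, Nat.pos_of_ne_zero hN⟩
    set ρ0 : Matrix (Fin N) (Fin N) ℂ := Matrix.diagonal (Pi.single i0 (1:ℂ)) with hρ0
    set ρ' : Fin l → Matrix (Fin N) (Fin N) ℂ :=
      fun i => if t i = 0 then ρ0 else ((t i)⁻¹ : ℂ) • Stmt16.pA (M i) ρ with hρ'
    have hkey : tensorEB σ M Ψ ρ = ∑ i, t i • ((σ i) ⊗ₖ Ψ (ρ' i)) := by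
      show ∑ i, (σ i) ⊗ₖ Ψ (Stmt16.pA (M i) ρ) = _
      refine Finset.sum_congr rfl fun i _ => ?_
      rcases eq_or_ne (t i) 0 with h0 | h0
      · rw [hzero i h0, h0, map_zero, Matrix.kronecker_zero, zero_smul]
      · rw [hρ'];
        simp only [if_neg h0]
        rw [_root_.map_smul, Matrix.kronecker_smul, Stmt16.rsmul, smul_smul,
          mul_inv_cancel₀ (Complex.ofReal_ne_zero.mpr h0), one_smul]
    have hmem : ∀ i, (σ i) ⊗ₖ Ψ (ρ' i) ∈ {X | ∃ (pr : Fin l → ℝ) (ρ : Matrix (Fin N) (Fin N) ℂ),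
        (∀ i, 0 ≤ pr i) ∧ (∑ i, pr i = 1) ∧ ρ.PosSemidef ∧ ρ.trace = 1 ∧
        X = (∑ i, pr i • σ i) ⊗ₖ Ψ ρ} := by
      intro i
      refine ⟨Pi.single i 1, ρ' i, fun j => ?_, by simp, ?_, ?_, ?_⟩
      · rcases eq_or_ne j i with rfl | h
        · simp
        · simp [Pi.single_apply, h]
      · rw [hρ']
        dsimp only
        split_ifs with h0
        · exact Stmt16.diag_single_psd i0
        · rw [← Complex.ofReal_inv]
          exact Stmt16.psd_smul (Stmt16.pA_posSemidef (hMpos i) hρ) (inv_nonneg.mpr (ht0 i))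
      · rw [hρ']
        dsimp only
        split_ifs with h0
        · exact Stmt16.diag_single_trace i0
        · rw [Matrix.trace_smul, htrA i, smul_eq_mul]
          exact inv_mul_cancel₀ (by exact_mod_cast h0)
      · congr 1
        have hsum : ∑ j, (Pi.single i (1:ℝ) : Fin l → ℝ) j • σ j = σ i := by
          rw [Finset.sum_eq_single i]
          · simp
          · intro j _ h
            simp [Pi.single_apply, h]
          · simp
        rw [hsum]
    rw [hkey]
    exact Convex.sum_mem (convex_convexHull ℝ _) (fun i _ => ht0 i) (by simpa using hsumt)
      (fun i _ => subset_convexHull ℝ _ (hmem i))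
  · -- convex hull ⊆ output set
    apply convexHull_min
    · -- base set ⊆ output set
      rintro X ⟨pr, ρ, hpr0, hpr1, hρ, hρt, rfl⟩
      choose v hv0 hvM using hMnorm
      have hcpos : ∀ j, 0 < ∑ u, Complex.normSq (v j u) := by
        intro j
        have hne : ∃ u, v j u ≠ 0 := by
          by_contra h
          push_neg at h
          exact hv0 j (funext h)
        obtain ⟨u, hu⟩ := hne
        exact Finset.sum_pos' (fun u _ => Complex.normSq_nonneg _)
          ⟨u, Finset.mem_univ u, Complex.normSq_pos.mpr hu⟩
      have hdot : ∀ j, star (v j) ⬝ᵥ v j = ((∑ u, Complex.normSq (v j u) : ℝ) : ℂ) := by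
        intro j
        simp only [dotProduct, Pi.star_apply]
        push_cast
        refine Finset.sum_congr rfl fun u _ => ?_
        rw [Complex.star_def, Complex.normSq_eq_conj_mul_self]
      have hs0 : ∀ i j, 0 ≤ star (v j) ⬝ᵥ (M i *ᵥ v j) := fun i j => (hMpos i).dotProduct_mulVec_nonneg _
      have hsd : ∀ j, star (v j) ⬝ᵥ (M j *ᵥ v j) = ((∑ u, Complex.normSq (v j u) : ℝ) : ℂ) := by
        intro j
        rw [hvM j, hdot j]
      have hssum : ∀ j, ∑ i, star (v j) ⬝ᵥ (M i *ᵥ v j)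
          = ((∑ u, Complex.normSq (v j u) : ℝ) : ℂ) := by
        intro j
        have h1 : ∑ i, star (v j) ⬝ᵥ (M i *ᵥ v j) = star (v j) ⬝ᵥ ((∑ i, M i) *ᵥ v j) := by
          simp only [dotProduct, mulVec, Matrix.sum_apply, Finset.sum_mul, Finset.mul_sum]
          conv_lhs => rw [Finset.sum_comm]
          conv_lhs => enter [2, a]; rw [Finset.sum_comm]
        rw [h1, hMsum, Matrix.one_mulVec, hdot j]
      have hoff : ∀ i j, i ≠ j → star (v j) ⬝ᵥ (M i *ᵥ v j) = 0 := by
        intro i j hij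
        have h3 := Finset.add_sum_erase Finset.univ
          (fun i' => star (v j) ⬝ᵥ (M i' *ᵥ v j)) (Finset.mem_univ j)
        rw [hssum j] at h3
        have h4 : star (v j) ⬝ᵥ (M j *ᵥ v j)
            + ∑ i' ∈ Finset.univ.erase j, star (v j) ⬝ᵥ (M i' *ᵥ v j)
            = ((∑ u, Complex.normSq (v j u) : ℝ) : ℂ) := h3
        rw [hsd j] at h4
        have h2 : ∑ i' ∈ Finset.univ.erase j, star (v j) ⬝ᵥ (M i' *ᵥ v j) = 0 :=
          add_eq_left.mp h4
        exact (Finset.sum_eq_zero_iff_of_nonneg (fun i' _ => hs0 i' j)).mp h2 i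
          (Finset.mem_erase.mpr ⟨hij, Finset.mem_univ i⟩)
      set ρh : Matrix (Fin N × Fin p) (Fin N × Fin p) ℂ :=
        ∑ j, ((pr j / (∑ u, Complex.normSq (v j u)) : ℝ) : ℂ) •
          (ρ ⊗ₖ vecMulVec (v j) (star (v j))) with hρh
      refine ⟨ρh, ?_, ?_, ?_⟩
      · exact Stmt16.psd_sum _ fun j =>
          Stmt16.psd_smul (Stmt16.kron_psd hρ _) (div_nonneg (hpr0 j) (hcpos j).le)
      · rw [hρh, Matrix.trace_sum]
        have htr1 : ∀ j, ((((pr j / (∑ u, Complex.normSq (v j u)) : ℝ)) : ℂ) •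
            (ρ ⊗ₖ vecMulVec (v j) (star (v j)))).trace = ((pr j : ℝ) : ℂ) := by
          intro j
          rw [Matrix.trace_smul, Matrix.trace_kronecker, hρt, Stmt16.trace_vvmul, one_mul,
            smul_eq_mul]
          push_cast
          rw [div_mul_cancel₀]
          exact_mod_cast (hcpos j).ne'
        rw [Finset.sum_congr rfl fun j _ => htr1 j]
        exact_mod_cast hpr1
      · have hpA : ∀ i, Stmt16.pA (M i) ρh = ((pr i : ℝ) : ℂ) • ρ := by
          intro i
          rw [hρh, Stmt16.pA_sum]
          have heach : ∀ j, Stmt16.pA (M i)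
              (((pr j / (∑ u, Complex.normSq (v j u)) : ℝ) : ℂ) •
                (ρ ⊗ₖ vecMulVec (v j) (star (v j))))
              = ((pr j / (∑ u, Complex.normSq (v j u)) : ℝ) : ℂ) •
                ((star (v j) ⬝ᵥ (M i *ᵥ v j)) • ρ) := fun j => by
            rw [Stmt16.pA_smul, Stmt16.pA_kron]
          rw [Finset.sum_congr rfl fun j _ => heach j]
          rw [Finset.sum_eq_single i]
          · rw [hsd i, smul_smul]
            congr 1
            push_cast
            rw [div_mul_cancel₀]
            exact_mod_cast (hcpos i).ne'
          · intro j _ hji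
            rw [hoff i j (Ne.symm hji)]
            simp
          · intro h
            exact absurd (Finset.mem_univ i) h
        show _ = ∑ i, (σ i) ⊗ₖ Ψ (Stmt16.pA (M i) ρh)
        calc (∑ i, pr i • σ i) ⊗ₖ Ψ ρ
            = ∑ i, (pr i • σ i) ⊗ₖ Ψ ρ := Stmt16.sum_kron _ _
          _ = ∑ i, (σ i) ⊗ₖ Ψ (Stmt16.pA (M i) ρh) := by
              refine Finset.sum_congr rfl fun i _ => ?_
              rw [hpA i, _root_.map_smul, Matrix.kronecker_smul, Stmt16.rsmul (pr i) (σ i),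
                Matrix.smul_kronecker]

    · -- output set is convex
      rintro X ⟨ρ₁, h1, ht1, rfl⟩ Y ⟨ρ₂, h2, ht2, rfl⟩ a b ha hb hab
      refine ⟨a • ρ₁ + b • ρ₂, ?_, ?_, ?_⟩
      · rw [Stmt16.rsmul a ρ₁, Stmt16.rsmul b ρ₂]
        exact (Stmt16.psd_smul h1 ha).add (Stmt16.psd_smul h2 hb)
      · rw [Matrix.trace_add, Stmt16.rsmul a ρ₁, Stmt16.rsmul b ρ₂, Matrix.trace_smul,
          Matrix.trace_smul, ht1, ht2]
        simp only [smul_eq_mul, mul_one]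
        exact_mod_cast hab
      · show a • tensorEB σ M Ψ ρ₁ + b • tensorEB σ M Ψ ρ₂ = tensorEB σ M Ψ _
        show a • (∑ i, (σ i) ⊗ₖ Ψ (Stmt16.pA (M i) ρ₁))
            + b • (∑ i, (σ i) ⊗ₖ Ψ (Stmt16.pA (M i) ρ₂))
            = ∑ i, (σ i) ⊗ₖ Ψ (Stmt16.pA (M i) (a • ρ₁ + b • ρ₂))
        rw [Stmt16.rsmul a ρ₁, Stmt16.rsmul b ρ₂, Stmt16.rsmul, Stmt16.rsmul,
          Finset.smul_sum, Finset.smul_sum, ← Finset.sum_add_distrib]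
        refine Finset.sum_congr rfl fun i _ => ?_
        rw [Stmt16.pA_add, Stmt16.pA_smul, Stmt16.pA_smul, map_add, _root_.map_smul,
          _root_.map_smul, Matrix.kronecker_add, Matrix.kronecker_smul, Matrix.kronecker_smul]
end

section
/- For J ⊆ {1,…,k} nonempty and strictly positive weights w_1, …, w_k, let β = Σ_{j∈J} w_j and 1/γ = Σ_{j∈J} 1/w_j. Then γ (#J)² ≤ β (harmonic–arithmetic mean inequality), so h(J) = √(β − γ(#J − 2)²) is well-defined. Moreover h is monotone: if J ⊆ J' ⊆ {1,…,k}, then h(J) ≤ h(J'). -/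
open Finset

lemma aux_key (a u p : ℝ) (ha : 0 < a) (hu : 0 < u) :
    (u⁻¹ + a)⁻¹ * (p - 1) ^ 2 ≤ u + a⁻¹ * (p - 2) ^ 2 := by
  have h1 : 0 < u⁻¹ + a := by positivity
  rw [inv_mul_le_iff₀ h1]
  have h2 : 0 ≤ (a * u - (p - 2)) ^ 2 / (a * u) := by positivity
  have h3 : (a * u - (p - 2)) ^ 2 / (a * u) =
      a * u - 2 * (p - 2) + (p - 2) ^ 2 * u⁻¹ * a⁻¹ := by
    field_simp
    ring
  have e : (u⁻¹ + a) * (u + a⁻¹ * (p - 2) ^ 2) =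
      u * u⁻¹ + (a * a⁻¹) * (p - 2) ^ 2 +
        (a * u - 2 * (p - 2) + (p - 2) ^ 2 * u⁻¹ * a⁻¹) + 2 * (p - 2) := by
    ring
  rw [e, mul_inv_cancel₀ hu.ne', mul_inv_cancel₀ ha.ne']
  nlinarith [h2, h3]

section Aux
variable {ι : Type*} [DecidableEq ι] (w : ι → ℝ)

lemma aux_amhm (hw : ∀ i, 0 < w i) (J : Finset ι) :
    ((J.card : ℝ)) ^ 2 ≤ (∑ j ∈ J, w j) * (∑ j ∈ J, (w j)⁻¹) := by
  have := Finset.sum_mul_sq_le_sq_mul_sq J (fun i => Real.sqrt (w i))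
      (fun i => Real.sqrt ((w i)⁻¹))
  have e1 : ∑ i ∈ J, Real.sqrt (w i) * Real.sqrt ((w i)⁻¹) = (J.card : ℝ) := by
    rw [Finset.card_eq_sum_ones J]
    push_cast
    apply Finset.sum_congr rfl
    intro i _
    rw [← Real.sqrt_mul (le_of_lt (hw i)), mul_inv_cancel₀ (ne_of_gt (hw i)), Real.sqrt_one]
  have e2 : ∀ i ∈ J, Real.sqrt (w i) ^ 2 = w i := fun i _ => Real.sq_sqrt (le_of_lt (hw i))
  have e3 : ∀ i ∈ J, Real.sqrt ((w i)⁻¹) ^ 2 = (w i)⁻¹ := fun i _ =>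
    Real.sq_sqrt (le_of_lt (inv_pos.mpr (hw i)))
  rw [e1, Finset.sum_congr rfl e2, Finset.sum_congr rfl e3] at this
  exact this

/-- one-step monotonicity of the radicand -/
lemma aux_step (hw : ∀ i, 0 < w i) (J : Finset ι) (hJ : J.Nonempty) (s : ι) (hs : s ∉ J) :
    (∑ j ∈ J, w j) - (∑ j ∈ J, (w j)⁻¹)⁻¹ * ((J.card : ℝ) - 2) ^ 2 ≤
    (∑ j ∈ insert s J, w j) -
      (∑ j ∈ insert s J, (w j)⁻¹)⁻¹ * (((insert s J).card : ℝ) - 2) ^ 2 := by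
  rw [Finset.sum_insert hs, Finset.sum_insert hs, Finset.card_insert_of_notMem hs]
  have hapos : 0 < ∑ j ∈ J, (w j)⁻¹ :=
    Finset.sum_pos (fun i _ => inv_pos.mpr (hw i)) hJ
  have key := aux_key (∑ j ∈ J, (w j)⁻¹) (w s) ((J.card : ℝ) + 1 - 1) hapos (hw s)
  push_cast
  have e : ((J.card : ℝ) + 1 - 1 - 1) = (J.card : ℝ) + 1 - 2 := by ring
  have e2 : ((J.card : ℝ) + 1 - 1 - 2) = (J.card : ℝ) - 2 := by ring
  rw [e, e2] at key
  linarith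

lemma aux_union (hw : ∀ i, 0 < w i) (D : Finset ι) :
    ∀ J : Finset ι, J.Nonempty → Disjoint J D →
    (∑ j ∈ J, w j) - (∑ j ∈ J, (w j)⁻¹)⁻¹ * ((J.card : ℝ) - 2) ^ 2 ≤
    (∑ j ∈ J ∪ D, w j) - (∑ j ∈ J ∪ D, (w j)⁻¹)⁻¹ * (((J ∪ D).card : ℝ) - 2) ^ 2 := by
  induction D using Finset.induction_on with
  | empty => intro J hJ _; simp
  | @insert s D hsD ih =>
    intro J hJ hdisj
    have hsJ : s ∉ J := fun hc => (Finset.disjoint_insert_right.mp hdisj).1 hc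
    have hU : J ∪ insert s D = insert s J ∪ D := by
      ext x; simp [Finset.mem_insert, Finset.mem_union]
    rw [hU]
    refine le_trans (aux_step w hw J hJ s hsJ) (ih (insert s J) (Finset.insert_nonempty s J) ?_)
    rw [Finset.disjoint_insert_left]
    exact ⟨hsD, (Finset.disjoint_insert_right.mp hdisj).2⟩

lemma aux_mono (hw : ∀ i, 0 < w i) (J J' : Finset ι) (hJ : J.Nonempty) (hsub : J ⊆ J') :
    (∑ j ∈ J, w j) - (∑ j ∈ J, (w j)⁻¹)⁻¹ * ((J.card : ℝ) - 2) ^ 2 ≤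
    (∑ j ∈ J', w j) - (∑ j ∈ J', (w j)⁻¹)⁻¹ * ((J'.card : ℝ) - 2) ^ 2 := by
  have hJ' : J' = J ∪ (J' \ J) := (Finset.union_sdiff_of_subset hsub).symm
  rw [hJ']
  exact aux_union w hw (J' \ J) J hJ Finset.disjoint_sdiff

end Aux

/-- for a nonempty `J ⊆ [k]` and positive weights, with `β = ∑_{j∈J} w_j` and
`1/γ = ∑_{j∈J} 1/w_j`, one has `γ (#J)² ≤ β` (harmonic-arithmetic mean inequality), so
`h(J) = √(β − γ(#J−2)²)` is well-defined; moreover `h` is monotone in `J`. -/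
theorem stmt17 (k : ℕ) (w : Fin k → ℝ) (hw : ∀ i, 0 < w i)
    (β : Finset (Fin k) → ℝ) (hβ : ∀ J, β J = ∑ j ∈ J, w j)
    (γ : Finset (Fin k) → ℝ) (hγ : ∀ J, γ J = (∑ j ∈ J, (w j)⁻¹)⁻¹)
    (h : Finset (Fin k) → ℝ)
    (hh : ∀ J, h J = Real.sqrt (β J - γ J * ((J.card : ℝ) - 2) ^ 2)) :
    (∀ J : Finset (Fin k), J.Nonempty → γ J * (J.card : ℝ) ^ 2 ≤ β J) ∧
    (∀ J : Finset (Fin k), J.Nonempty → 0 ≤ β J - γ J * ((J.card : ℝ) - 2) ^ 2) ∧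
    (∀ J J' : Finset (Fin k), J.Nonempty → J ⊆ J' → h J ≤ h J') := by
  have part1 : ∀ J : Finset (Fin k), J.Nonempty → γ J * (J.card : ℝ) ^ 2 ≤ β J := by
    intro J hJ
    rw [hβ, hγ]
    have hapos : 0 < ∑ j ∈ J, (w j)⁻¹ :=
      Finset.sum_pos (fun i _ => inv_pos.mpr (hw i)) hJ
    rw [inv_mul_le_iff₀ hapos, mul_comm]
    exact aux_amhm w hw J
  have part2 : ∀ J : Finset (Fin k), J.Nonempty → 0 ≤ β J - γ J * ((J.card : ℝ) - 2) ^ 2 := by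
    intro J hJ
    have h1 := part1 J hJ
    have hγpos : 0 < γ J := by
      rw [hγ]
      exact inv_pos.mpr (Finset.sum_pos (fun i _ => inv_pos.mpr (hw i)) hJ)
    have hp : (1 : ℝ) ≤ (J.card : ℝ) := by exact_mod_cast Finset.card_pos.mpr hJ
    nlinarith [sq_nonneg ((J.card : ℝ) - 2), sq_nonneg (J.card : ℝ)]
  refine ⟨part1, part2, ?_⟩
  intro J J' hJ hsub
  rw [hh, hh]
  apply Real.sqrt_le_sqrt
  rw [hβ, hβ, hγ, hγ]
  exact aux_mono w hw J J' hJ hsub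
end

section
/- Fix k ≥ 3 and real numbers a_1, …, a_k with Σ a_i² = 1 and strictly positive weights w_i. The function x ↦ (2−k)x + Σ_{i=1}^k √(x² + a_i² w_i) on [0,∞) is convex, and its derivative at x = 0 is negative whenever at least 3 of the products a_i² w_i are nonzero; hence its minimum over [0,∞) is attained at a unique point X > 0. -/
open Set

lemma sqrt_sq_add_eq_norm {c : ℝ} (hc : 0 ≤ c) (x : ℝ) :
    Real.sqrt (x ^ 2 + c) = ‖(⟨x, Real.sqrt c⟩ : ℂ)‖ := by
  rw [Complex.norm_def, Complex.normSq_mk, Real.mul_self_sqrt hc, sq]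

lemma strictConvexOn_sqrt_sq_add {c : ℝ} (hc : 0 < c) :
    StrictConvexOn ℝ (univ : Set ℝ) (fun x => Real.sqrt (x ^ 2 + c)) := by
  refine ⟨convex_univ, ?_⟩
  intro x _ y _ hxy s t hs ht hst
  have hkey := fun z => sqrt_sq_add_eq_norm hc.le z
  set u : ℂ := ⟨x, Real.sqrt c⟩ with hu
  set v : ℂ := ⟨y, Real.sqrt c⟩ with hv
  have hsc : (0:ℝ) < Real.sqrt c := Real.sqrt_pos.2 hc
  have hsum : (⟨s • x + t • y, Real.sqrt c⟩ : ℂ) = s • u + t • v := by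
    apply Complex.ext <;> simp [hu, hv, Complex.real_smul, smul_eq_mul]
    · nlinarith [hst]
  have hune : u ≠ 0 := fun h => by
    have := congrArg Complex.im h; simp [hu] at this; exact hsc.ne' this
  have hvne : v ≠ 0 := fun h => by
    have := congrArg Complex.im h; simp [hv] at this; exact hsc.ne' this
  have hns : ¬ SameRay ℝ (s • u) (t • v) := by
    intro hray
    obtain ⟨r₁, r₂, hr₁, hr₂, heq⟩ := hray.exists_pos (smul_ne_zero hs.ne' hune)
      (smul_ne_zero ht.ne' hvne)
    rw [smul_smul, smul_smul] at heq
    have him := congrArg Complex.im heq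
    have hre := congrArg Complex.re heq
    simp [hu, hv, Complex.real_smul] at him hre
    have h1 : r₁ * s = r₂ * t := by
      field_simp at him
      rcases him with h | h
      · exact h
      · exact absurd h hsc.ne'
    have : x = y := by
      rw [h1] at hre
      have hpos : 0 < r₂ * t := mul_pos hr₂ ht
      exact mul_left_cancel₀ hpos.ne' hre
    exact hxy this
  calc Real.sqrt ((s • x + t • y) ^ 2 + c) = ‖s • u + t • v‖ := by rw [hkey, hsum]
    _ < ‖s • u‖ + ‖t • v‖ := norm_add_lt_of_not_sameRay hns
    _ = s • Real.sqrt (x ^ 2 + c) + t • Real.sqrt (y ^ 2 + c) := by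
        rw [norm_smul, norm_smul, hkey x, hkey y]
        simp [hu, hv, Real.norm_of_nonneg hs.le, Real.norm_of_nonneg ht.le, smul_eq_mul]

lemma convexOn_sqrt_sq_add {c : ℝ} (hc : 0 ≤ c) :
    ConvexOn ℝ (univ : Set ℝ) (fun x => Real.sqrt (x ^ 2 + c)) := by
  rcases hc.lt_or_eq with h | h
  · exact (strictConvexOn_sqrt_sq_add h).convexOn
  · have : (fun x : ℝ => Real.sqrt (x ^ 2 + c)) = fun x : ℝ => ‖x‖ := by
      funext x
      rw [← h, add_zero, Real.sqrt_sq_eq_abs, Real.norm_eq_abs]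
    rw [this]
    exact convexOn_univ_norm

lemma convexOn_finset_sum {ι : Type*} (t : Finset ι) {s : Set ℝ} (hs : Convex ℝ s)
    {f : ι → ℝ → ℝ} (h : ∀ i ∈ t, ConvexOn ℝ s (f i)) :
    ConvexOn ℝ s (fun x => ∑ i ∈ t, f i x) := by
  classical
  induction t using Finset.induction_on with
  | empty => simpa using convexOn_const (0:ℝ) hs
  | insert _ _ hni ih =>
    simp only [Finset.sum_insert hni]
    exact (h _ (Finset.mem_insert_self _ _)).add
      (ih fun i hi => h i (Finset.mem_insert_of_mem hi))


/-- fix `k ≥ 3`, reals `a_i` with `∑ a_i² = 1` and positive weights `w_i`.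
The function `g(x) = (2−k)x + ∑ √(x² + a_i² w_i)` is convex on `[0,∞)`; if at least 3 of
the products `a_i² w_i` are nonzero then its (one-sided) derivative at `0` is negative;
hence the minimum of `g` over `[0,∞)` is attained at a unique point `X > 0`. -/
theorem stmt18 (k : ℕ) (hk : 3 ≤ k) (a w : Fin k → ℝ)
    (ha : ∑ i, a i ^ 2 = 1) (hw : ∀ i, 0 < w i)
    (g : ℝ → ℝ)
    (hg : ∀ x, g x = (2 - (k : ℝ)) * x + ∑ i, Real.sqrt (x ^ 2 + a i ^ 2 * w i))
    (hcard : 3 ≤ (Finset.univ.filter fun i => a i ^ 2 * w i ≠ 0).card) :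
    ConvexOn ℝ (Set.Ici (0 : ℝ)) g ∧
    (∃ D : ℝ, D < 0 ∧ HasDerivWithinAt g D (Set.Ici (0 : ℝ)) 0) ∧
    (∃ X : ℝ, 0 < X ∧ IsMinOn g (Set.Ici (0 : ℝ)) X ∧
      ∀ Y ∈ Set.Ici (0 : ℝ), IsMinOn g (Set.Ici (0 : ℝ)) Y → Y = X) := by
  classical
  have hgeq : g = fun x => (2 - (k : ℝ)) * x + ∑ i, Real.sqrt (x ^ 2 + a i ^ 2 * w i) :=
    funext hg
  set c : Fin k → ℝ := fun i => a i ^ 2 * w i with hcdef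
  have hc0 : ∀ i, 0 ≤ c i := fun i => mul_nonneg (sq_nonneg _) (hw i).le
  -- a witness with positive c
  obtain ⟨i0, hi0⟩ : ∃ i, c i ≠ 0 := by
    obtain ⟨i, hi⟩ := Finset.card_pos.mp (lt_of_lt_of_le (by norm_num) hcard)
    exact ⟨i, (Finset.mem_filter.mp hi).2⟩
  have hi0pos : 0 < c i0 := (hc0 i0).lt_of_ne (Ne.symm hi0)
  -- linear part is convex
  have hlin : ConvexOn ℝ (Ici (0:ℝ)) (fun x => (2 - (k:ℝ)) * x) :=
    ⟨convex_Ici 0, fun x _ y _ s t _ _ _ => le_of_eq (by simp [smul_eq_mul]; ring)⟩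
  -- strict convexity of g
  have hstrict : StrictConvexOn ℝ (Ici (0:ℝ)) g := by
    have hrw : g = (fun x => ((2 - (k:ℝ)) * x + ∑ i ∈ Finset.univ.erase i0,
        Real.sqrt (x ^ 2 + c i)) + Real.sqrt (x ^ 2 + c i0)) := by
      funext x
      rw [hg x, ← Finset.add_sum_erase _ _ (Finset.mem_univ i0)]
      ring
    rw [hrw]
    refine ConvexOn.add_strictConvexOn ?_
      ((strictConvexOn_sqrt_sq_add hi0pos).subset (subset_univ _) (convex_Ici 0))
    exact hlin.add ((convexOn_finset_sum _ (convex_Ici 0)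
      (fun i _ => (convexOn_sqrt_sq_add (hc0 i)).subset (subset_univ _) (convex_Ici 0))))
  have hconv : ConvexOn ℝ (Ici (0:ℝ)) g := hstrict.convexOn
  -- derivative of each summand at 0 within Ici 0
  have hderiv : ∀ i : Fin k, HasDerivWithinAt (fun x => Real.sqrt (x ^ 2 + c i))
      (if c i = 0 then (1:ℝ) else 0) (Ici (0:ℝ)) 0 := by
    intro i
    by_cases h : c i = 0
    · rw [if_pos h]
      refine (hasDerivWithinAt_id (0:ℝ) (Ici 0)).congr ?_ ?_
      · intro y hy; simp [h, Real.sqrt_sq hy]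
      · rw [h]; norm_num
    · rw [if_neg h]
      have hcpos : 0 < c i := (hc0 i).lt_of_ne (Ne.symm h)
      have h1 : HasDerivAt (fun x : ℝ => x ^ 2 + c i) 0 0 := by
        simpa using ((hasDerivAt_pow 2 (0:ℝ)).add_const (c i))
      have h2 : HasDerivAt Real.sqrt (1 / (2 * Real.sqrt ((0:ℝ) ^ 2 + c i)))
          ((0:ℝ) ^ 2 + c i) := Real.hasDerivAt_sqrt (by positivity)
      have h3 := h2.comp 0 h1
      simpa [Function.comp_def] using h3.hasDerivWithinAt
  -- derivative of g at 0 within Ici 0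
  set D : ℝ := (2 - (k:ℝ)) + ∑ i, if c i = 0 then (1:ℝ) else 0 with hD
  have hgd : HasDerivWithinAt g D (Ici (0:ℝ)) 0 := by
    rw [hgeq]
    have hlind : HasDerivWithinAt (fun x : ℝ => (2 - (k:ℝ)) * x) (2 - (k:ℝ)) (Ici 0) 0 := by
      simpa using ((hasDerivAt_id (0:ℝ)).const_mul (2 - (k:ℝ))).hasDerivWithinAt
    exact hlind.add (HasDerivWithinAt.fun_sum fun i _ => hderiv i)
  -- D < 0
  set m := (Finset.univ.filter fun i => c i ≠ 0).card with hm
  have hmk : m ≤ k := le_trans (Finset.card_filter_le _ _) (by simp)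
  have hsum_ite : (∑ i, if c i = 0 then (1:ℝ) else 0) = ((k - m : ℕ) : ℝ) := by
    rw [Finset.sum_boole]
    congr 1
    have h := Finset.card_filter_add_card_filter_not
      (s := (Finset.univ : Finset (Fin k))) (p := fun i => c i = 0)
    simp only [Finset.card_univ, Fintype.card_fin] at h
    have : (Finset.univ.filter fun i => ¬ c i = 0).card = m := by rw [hm]
    omega
  have hDneg : D < 0 := by
    rw [hD, hsum_ite]
    have h1 : ((k - m : ℕ) : ℝ) = (k : ℝ) - (m : ℝ) := by
      rw [Nat.cast_sub hmk]
    have h2 : (3:ℝ) ≤ (m:ℝ) := by exact_mod_cast hcard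
    linarith
  -- continuity of g
  have hcont : Continuous g := by
    rw [hgeq]
    exact (continuous_const.mul continuous_id).add
      (continuous_finset_sum _ fun i _ => Real.continuous_sqrt.comp (by continuity))
  -- lower bound g x ≥ 2x for x ≥ 0
  have hlb : ∀ x : ℝ, 0 ≤ x → 2 * x ≤ g x := by
    intro x hx
    rw [hg]
    have h2 : (k:ℝ) * x ≤ ∑ i, Real.sqrt (x ^ 2 + c i) := by
      calc (k:ℝ) * x = ∑ _i : Fin k, x := by
            simp [Finset.sum_const, Finset.card_univ, mul_comm]
        _ ≤ _ := Finset.sum_le_sum fun i _ => by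
            have h := Real.sqrt_le_sqrt (show x ^ 2 ≤ x ^ 2 + c i by nlinarith [hc0 i])
            rwa [Real.sqrt_sq hx] at h
    nlinarith
  -- g 0 > 0
  have hg0 : 0 < g 0 := by
    rw [hg]
    have hpos : 0 < ∑ i, Real.sqrt ((0:ℝ) ^ 2 + c i) :=
      Finset.sum_pos' (fun i _ => Real.sqrt_nonneg _)
        ⟨i0, Finset.mem_univ _, Real.sqrt_pos.2 (by positivity)⟩
    linarith
  -- minimum on compact interval
  obtain ⟨X, hXmem, hXmin⟩ := isCompact_Icc.exists_isMinOn
    (Set.nonempty_Icc.2 hg0.le) (hcont.continuousOn (s := Icc (0:ℝ) (g 0)))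
  have hXmin' : IsMinOn g (Ici (0:ℝ)) X := by
    rw [isMinOn_iff]
    intro y hy
    rcases le_or_gt y (g 0) with h | h
    · exact isMinOn_iff.mp hXmin y ⟨hy, h⟩
    · have h1 : g X ≤ g 0 := isMinOn_iff.mp hXmin 0 ⟨le_refl _, hg0.le⟩
      have h2 := hlb y (le_trans hg0.le h.le)
      linarith
  -- there is a point with smaller value than g 0
  have hslope : Filter.Tendsto (slope g 0) (nhdsWithin 0 (Ioi (0:ℝ))) (nhds D) := by
    have := hasDerivWithinAt_iff_tendsto_slope.mp hgd
    rwa [Set.Ici_sdiff_left] at this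
  obtain ⟨y, hy1, hy2⟩ : ∃ y : ℝ, slope g 0 y < 0 ∧ y ∈ Ioi (0:ℝ) := by
    have hev : ∀ᶠ y in nhdsWithin 0 (Ioi (0:ℝ)), slope g 0 y < 0 :=
      hslope.eventually_lt_const hDneg
    exact (hev.and self_mem_nhdsWithin).exists
  have hgy : g y < g 0 := by
    have hy0 : (0:ℝ) < y := hy2
    rw [slope_def_field, sub_zero] at hy1
    rcases div_neg_iff.mp hy1 with ⟨h1, h2⟩ | ⟨h1, h2⟩
    · linarith
    · linarith
  refine ⟨hconv, ⟨D, hDneg, hgd⟩, ⟨X, ?_, hXmin', ?_⟩⟩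
  · rcases (hXmem.1).lt_or_eq with h | h
    · exact h
    · exfalso
      have hXy : g X ≤ g y := isMinOn_iff.mp hXmin' y (show (0:ℝ) < y from hy2).le
      rw [← h] at hXy
      linarith
  · intro Y hY hYmin
    exact hstrict.eq_of_isMinOn hYmin hXmin' hY hXmem.1
end
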